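/- arXiv:1802.09872 — 14 statements merged into one kernel-verified Lean document; each statement's English description precedes it below -/
import Mathlib

section
/- A vector x ∈ ℝⁿ is a weakly feasible solution of the interval linear system 𝐀x = 𝐛 (i.e., there exist A ∈ 𝐀 and b ∈ 𝐛 with Ax = b) if and only if it is a weakly feasible solution of the split system 𝐀x ≤ 𝐛, 𝐀x ≥ 𝐛 with independent coefficient selections (i.e., there exist A₁, A₂ ∈ 𝐀 and b₁, b₂ ∈ 𝐛 with A₁x ≤ b₁ and A₂x ≥ b₂). -/
open Matrix

/-- Entrywise order on real matrices. -/
def matLE {m n : ℕ} (A B : Matrix (Fin m) (Fin n) ℝ) : Prop := ∀ i j, A i j ≤ B i j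

/-- Splitting an interval equation system into two opposite interval inequality systems
preserves the weakly feasible solutions. -/
theorem weak_feasibility_split (m n : ℕ) (Al Au : Matrix (Fin m) (Fin n) ℝ)
    (bl bu : Fin m → ℝ) (hA : matLE Al Au) (hb : bl ≤ bu) (x : Fin n → ℝ) :
    (∃ (A : Matrix (Fin m) (Fin n) ℝ) (b : Fin m → ℝ),
      matLE Al A ∧ matLE A Au ∧ bl ≤ b ∧ b ≤ bu ∧ A.mulVec x = b) ↔
    (∃ (A₁ A₂ : Matrix (Fin m) (Fin n) ℝ) (b₁ b₂ : Fin m → ℝ),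
      matLE Al A₁ ∧ matLE A₁ Au ∧ matLE Al A₂ ∧ matLE A₂ Au ∧
      bl ≤ b₁ ∧ b₁ ≤ bu ∧ bl ≤ b₂ ∧ b₂ ≤ bu ∧
      A₁.mulVec x ≤ b₁ ∧ b₂ ≤ A₂.mulVec x) := by
  constructor
  · rintro ⟨A, b, h1, h2, h3, h4, h5⟩
    exact ⟨A, A, b, b, h1, h2, h1, h2, h3, h4, h3, h4, le_of_eq h5, ge_of_eq h5⟩
  · rintro ⟨A₁, A₂, b₁, b₂, hA1l, hA1u, hA2l, hA2u, hb1l, hb1u, hb2l, hb2u, hle, hge⟩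
    set g0 : Fin m → ℝ := A₁.mulVec x with hg0
    set g1 : Fin m → ℝ := A₂.mulVec x with hg1
    set t : Fin m → ℝ := fun i => if bl i ≤ g0 i then 0 else (bl i - g0 i) / (g1 i - g0 i)
      with ht
    have hkey : ∀ i, 0 ≤ t i ∧ t i ≤ 1 ∧
        bl i ≤ (1 - t i) * g0 i + t i * g1 i ∧ (1 - t i) * g0 i + t i * g1 i ≤ bu i := by
      intro i
      by_cases h : bl i ≤ g0 i
      · have : t i = 0 := by simp [ht, h]
        rw [this]
        refine ⟨le_refl 0, by norm_num, by simpa using h, ?_⟩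
        simpa using le_trans (hle i) (hb1u i)
      · push_neg at h
        have hg1b : bl i ≤ g1 i := le_trans (hb2l i) (hge i)
        have hd : 0 < g1 i - g0 i := by linarith
        have hti : t i = (bl i - g0 i) / (g1 i - g0 i) := by simp [ht, not_le.mpr h]
        have ht0 : 0 ≤ t i := by
          rw [hti]; apply div_nonneg <;> linarith
        have ht1 : t i ≤ 1 := by
          rw [hti, div_le_one hd]; linarith
        have hval : (1 - t i) * g0 i + t i * g1 i = bl i := by
          rw [hti]; field_simp; ring
        exact ⟨ht0, ht1, le_of_eq hval.symm, hval ▸ hb i⟩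
    refine ⟨fun i j => (1 - t i) * A₁ i j + t i * A₂ i j,
      fun i => (1 - t i) * g0 i + t i * g1 i, ?_, ?_, ?_, ?_, ?_⟩
    · intro i j
      obtain ⟨h0, h1, -, -⟩ := hkey i
      have := hA1l i j; have := hA2l i j
      show Al i j ≤ (1 - t i) * A₁ i j + t i * A₂ i j
      nlinarith
    · intro i j
      obtain ⟨h0, h1, -, -⟩ := hkey i
      have := hA1u i j; have := hA2u i j
      show (1 - t i) * A₁ i j + t i * A₂ i j ≤ Au i j
      nlinarith
    · intro i; exact (hkey i).2.2.1
    · intro i; exact (hkey i).2.2.2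
    · funext i
      simp only [mulVec, dotProduct, hg0, hg1]
      rw [Finset.mul_sum, Finset.mul_sum, ← Finset.sum_add_distrib]
      exact Finset.sum_congr rfl fun j _ => by ring
end

section
/- Let A ∈ ℝ^{m×n} be a fixed matrix and let 𝐛 ⊆ ℝᵐ, 𝐜 ⊆ ℝⁿ be interval vectors. Then a vector x ∈ ℝⁿ is optimal for some scenario of the interval linear program min c⊤x subject to Ax = b, x ≥ 0 (with b ∈ 𝐛, c ∈ 𝐜) if and only if x is optimal for some scenario of the interval linear program min c⊤x subject to Ax ≤ b₁, −Ax ≤ −b₂, x ≥ 0 (with b₁ ∈ 𝐛, b₂ ∈ 𝐛 chosen independently, c ∈ 𝐜). -/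
open Matrix

/-- For an ILP with a fixed coefficient matrix, a vector is weakly optimal for the
equality-constrained form `min cᵀx, Ax = b, x ≥ 0` iff it is weakly optimal for the
split form `min cᵀx, Ax ≤ b₁, -Ax ≤ -b₂, x ≥ 0`. -/
theorem weak_optimality_split_fixed_matrix (m n : ℕ) (A : Matrix (Fin m) (Fin n) ℝ)
    (bl bu : Fin m → ℝ) (cl cu : Fin n → ℝ) (hb : bl ≤ bu) (hc : cl ≤ cu) (x : Fin n → ℝ) :
    (∃ (b : Fin m → ℝ) (c : Fin n → ℝ), bl ≤ b ∧ b ≤ bu ∧ cl ≤ c ∧ c ≤ cu ∧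
      (A.mulVec x = b ∧ 0 ≤ x) ∧
      ∀ x' : Fin n → ℝ, (A.mulVec x' = b ∧ 0 ≤ x') → c ⬝ᵥ x ≤ c ⬝ᵥ x') ↔
    (∃ (b₁ b₂ : Fin m → ℝ) (c : Fin n → ℝ),
      bl ≤ b₁ ∧ b₁ ≤ bu ∧ bl ≤ b₂ ∧ b₂ ≤ bu ∧ cl ≤ c ∧ c ≤ cu ∧
      (A.mulVec x ≤ b₁ ∧ -A.mulVec x ≤ -b₂ ∧ 0 ≤ x) ∧
      ∀ x' : Fin n → ℝ, (A.mulVec x' ≤ b₁ ∧ -A.mulVec x' ≤ -b₂ ∧ 0 ≤ x') →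
        c ⬝ᵥ x ≤ c ⬝ᵥ x') := by
  constructor
  · rintro ⟨b, c, hbl, hbu, hcl, hcu, ⟨hx, hx0⟩, hopt⟩
    refine ⟨b, b, c, hbl, hbu, hbl, hbu, hcl, hcu, ⟨hx.le, ?_, hx0⟩, ?_⟩
    · rw [hx]
    · rintro x' ⟨h1, h2, h3⟩
      exact hopt x' ⟨le_antisymm h1 (neg_le_neg_iff.mp h2), h3⟩
  · rintro ⟨b₁, b₂, c, hb1l, hb1u, hb2l, hb2u, hcl, hcu, ⟨h1, h2, hx0⟩, hopt⟩
    refine ⟨A.mulVec x, c, le_trans hb2l (neg_le_neg_iff.mp h2), le_trans h1 hb1u,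
      hcl, hcu, ⟨rfl, hx0⟩, ?_⟩
    rintro x' ⟨hx', h3⟩
    exact hopt x' ⟨hx'.le.trans h1, by rw [hx']; exact h2, h3⟩
end

section
/- Let A ∈ ℝ^{m×n} be a fixed matrix and let 𝐛 ⊆ ℝᵐ, 𝐜 ⊆ ℝⁿ be interval vectors. If x ∈ ℝⁿ is optimal for some scenario of the interval linear program min c⊤x subject to Ax ≤ b (with b ∈ 𝐛, c ∈ 𝐜), then there exist nonnegative vectors x⁺, x⁻ ∈ ℝⁿ with x = x⁺ − x⁻ such that the pair (x⁺, x⁻) is optimal for some scenario of the interval linear program min c₁⊤x⁺ − c₂⊤x⁻ subject to Ax⁺ − Ax⁻ ≤ b, x⁺ ≥ 0, x⁻ ≥ 0 (with b ∈ 𝐛 and c₁ ∈ 𝐜, c₂ ∈ 𝐜 chosen independently). -/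
open Matrix

/-- If `x` is weakly optimal for `min cᵀx, Ax ≤ b` with a fixed matrix `A`, then it can be
decomposed as `x = x⁺ - x⁻` with `(x⁺, x⁻)` weakly optimal for the transformed program
`min c₁ᵀx⁺ - c₂ᵀx⁻, Ax⁺ - Ax⁻ ≤ b, x⁺ ≥ 0, x⁻ ≥ 0`. -/
theorem weak_optimality_nonneg_substitution_forward (m n : ℕ) (A : Matrix (Fin m) (Fin n) ℝ)
    (bl bu : Fin m → ℝ) (cl cu : Fin n → ℝ) (hb : bl ≤ bu) (hc : cl ≤ cu) (x : Fin n → ℝ)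
    (hopt : ∃ (b : Fin m → ℝ) (c : Fin n → ℝ), bl ≤ b ∧ b ≤ bu ∧ cl ≤ c ∧ c ≤ cu ∧
      A.mulVec x ≤ b ∧ ∀ x' : Fin n → ℝ, A.mulVec x' ≤ b → c ⬝ᵥ x ≤ c ⬝ᵥ x') :
    ∃ xp xm : Fin n → ℝ, 0 ≤ xp ∧ 0 ≤ xm ∧ x = xp - xm ∧
      ∃ (b : Fin m → ℝ) (c₁ c₂ : Fin n → ℝ),
        bl ≤ b ∧ b ≤ bu ∧ cl ≤ c₁ ∧ c₁ ≤ cu ∧ cl ≤ c₂ ∧ c₂ ≤ cu ∧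
        (A.mulVec xp - A.mulVec xm ≤ b ∧ 0 ≤ xp ∧ 0 ≤ xm) ∧
        ∀ xp' xm' : Fin n → ℝ,
          (A.mulVec xp' - A.mulVec xm' ≤ b ∧ 0 ≤ xp' ∧ 0 ≤ xm') →
          c₁ ⬝ᵥ xp - c₂ ⬝ᵥ xm ≤ c₁ ⬝ᵥ xp' - c₂ ⬝ᵥ xm' := by
  obtain ⟨b, c, hbl, hbu, hcl, hcu, hfeas, hmin⟩ := hopt
  have hx : (fun i => max (x i) 0) - (fun i => max (-x i) 0) = x := by
    funext i
    rcases le_total (x i) 0 with h | h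
    · simp [Pi.sub_apply, max_eq_right h, max_eq_left (neg_nonneg.mpr h)]
    · simp [Pi.sub_apply, max_eq_left h, max_eq_right (neg_nonpos.mpr h)]
  refine ⟨fun i => max (x i) 0, fun i => max (-x i) 0, fun i => le_max_right _ _,
    fun i => le_max_right _ _, hx.symm, b, c, c, hbl, hbu, hcl, hcu, hcl, hcu, ?_, ?_⟩
  · refine ⟨?_, fun i => le_max_right _ _, fun i => le_max_right _ _⟩
    rw [← Matrix.mulVec_sub, hx]; exact hfeas
  · intro xp' xm' ⟨hf, _, _⟩
    rw [← Matrix.mulVec_sub] at hf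
    calc c ⬝ᵥ (fun i => max (x i) 0) - c ⬝ᵥ (fun i => max (-x i) 0)
        = c ⬝ᵥ x := by rw [← dotProduct_sub, hx]
      _ ≤ c ⬝ᵥ (xp' - xm') := hmin _ hf
      _ = c ⬝ᵥ xp' - c ⬝ᵥ xm' := by rw [dotProduct_sub]
end

section
/- Let A ∈ ℝ^{m×n} be a fixed matrix and let 𝐛 ⊆ ℝᵐ, 𝐜 ⊆ ℝⁿ be interval vectors. If a pair (x⁺, x⁻) of vectors in ℝⁿ is optimal for some scenario of the interval linear program min c₁⊤x⁺ − c₂⊤x⁻ subject to Ax⁺ − Ax⁻ ≤ b, x⁺ ≥ 0, x⁻ ≥ 0 (with b ∈ 𝐛 and c₁ ∈ 𝐜, c₂ ∈ 𝐜 chosen independently), then the vector x = x⁺ − x⁻ is optimal for some scenario of the interval linear program min c⊤x subject to Ax ≤ b (with b ∈ 𝐛, c ∈ 𝐜). -/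
/-!
Write the pair as `z = (x⁺, x⁻)`: it is optimal for an ordinary LP `min wᵀz, Gz ≤ β` whose rows are
those of `[A, -A]` and the sign constraints. By Farkas' lemma an optimal point carries KKT
multipliers: here `y ≥ 0` on the rows of `A` and `u, v ≥ 0` on the sign constraints, vanishing on
inactive constraints, with `Aᵀy - u = -c₁` and `-Aᵀy - v = c₂`. Hence `c := -Aᵀy` lies between
`c₂` and `c₁`, so in `𝐜`, and the same `y` certifies that `x⁺ - x⁻` is optimal for
`min cᵀx, Ax ≤ b`.
-/

open Matrix

section OrderedField

variable {𝕜 : Type*} [Field 𝕜] [LinearOrder 𝕜] [IsStrictOrderedRing 𝕜]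

theorem Finset.exists_pos_forall_mul_le {ι : Type*} (F : Finset ι) (u s : ι → 𝕜)
    (hs : ∀ i ∈ F, 0 < s i) : ∃ t : 𝕜, 0 < t ∧ ∀ i ∈ F, t * u i ≤ s i := by
  set M := ∑ i ∈ F, |u i| / s i
  have hM : 0 ≤ M := Finset.sum_nonneg fun i hi => div_nonneg (abs_nonneg _) (hs i hi).le
  refine ⟨(M + 1)⁻¹, by positivity, fun i hi => ?_⟩
  have hle : |u i| / s i ≤ M :=
    Finset.single_le_sum (fun j hj => div_nonneg (abs_nonneg _) (hs j hj).le) hi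
  rw [div_le_iff₀ (hs i hi)] at hle
  rw [inv_mul_le_iff₀ (by positivity)]
  nlinarith [le_abs_self (u i), (hs i hi).le]

variable {V : Type*} [AddCommGroup V] [Module 𝕜 V]

namespace LinearMap

def eliminateAlong (ℓ : V →ₗ[𝕜] 𝕜) (v₀ : V) : (V →ₗ[𝕜] 𝕜) →ₗ[𝕜] V →ₗ[𝕜] 𝕜 where
  toFun f := f - (f v₀ / ℓ v₀) • ℓ
  map_add' f f' := by
    ext
    simp only [add_apply, sub_apply, smul_apply, smul_eq_mul]
    ring
  map_smul' c f := by
    ext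
    simp only [smul_apply, sub_apply, smul_eq_mul, RingHom.id_apply]
    ring

variable {ℓ : V →ₗ[𝕜] 𝕜} {v₀ : V}

theorem eliminateAlong_apply_apply (f : V →ₗ[𝕜] 𝕜) (v : V) :
    eliminateAlong ℓ v₀ f v = f (v - (ℓ v / ℓ v₀) • v₀) := by
  simp only [eliminateAlong, coe_mk, AddHom.coe_mk, sub_apply, smul_apply, map_sub, map_smul,
    smul_eq_mul]
  ring

theorem eliminateAlong_self (hℓ : ℓ v₀ ≠ 0) : eliminateAlong ℓ v₀ ℓ = 0 := by
  ext v
  simp [eliminateAlong, div_self hℓ]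

theorem eq_smul_of_eliminateAlong_eq_zero {f : V →ₗ[𝕜] 𝕜} (hf : eliminateAlong ℓ v₀ f = 0) :
    f = (f v₀ / ℓ v₀) • ℓ :=
  sub_eq_zero.mp hf

end LinearMap

theorem farkas_exists_nonneg_sum_smul_eq {ι : Type*} (s : Finset ι) (g : ι → V →ₗ[𝕜] 𝕜)
    (w : V →ₗ[𝕜] 𝕜) (h : ∀ v, (∀ i ∈ s, 0 ≤ g i v) → 0 ≤ w v) :
    ∃ y : ι → 𝕜, 0 ≤ y ∧ w = ∑ i ∈ s, y i • g i := by
  classical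
  induction s using Finset.induction_on generalizing g w with
  | empty =>
    refine ⟨0, le_rfl, LinearMap.ext fun v => ?_⟩
    have hv := h v (by simp)
    have hnv := h (-v) (by simp)
    simp only [map_neg, Finset.sum_empty, LinearMap.zero_apply] at hnv ⊢
    linarith
  | insert a s ha ih =>
    suffices ∃ μ : 𝕜, 0 ≤ μ ∧ ∃ y : ι → 𝕜, 0 ≤ y ∧ w = μ • g a + ∑ i ∈ s, y i • g i by
      obtain ⟨μ, hμ, y, hy, rfl⟩ := this
      refine ⟨Function.update y a μ, le_update_iff.mpr ⟨hμ, fun j _ => hy j⟩, ?_⟩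
      rw [Finset.sum_insert ha, Function.update_self]
      congr 1
      exact Finset.sum_congr rfl fun i hi => by
        rw [Function.update_of_ne (ne_of_mem_of_not_mem hi ha)]
    by_cases hs : ∀ v, (∀ i ∈ s, 0 ≤ g i v) → 0 ≤ w v
    · obtain ⟨y, hy, rfl⟩ := ih g w hs
      exact ⟨0, le_rfl, y, hy, by rw [zero_smul, zero_add]⟩
    push Not at hs
    obtain ⟨v₀, hv₀, hwv₀⟩ := hs
    have hρ : g a v₀ < 0 := by
      by_contra! hρ
      exact hwv₀.not_ge (h v₀ (Finset.forall_mem_insert _ _ _ |>.mpr ⟨hρ, hv₀⟩))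
    -- Eliminating `g a` along `v₀` turns the hypothesis on `insert a s` into one on `s`.
    set E := LinearMap.eliminateAlong (g a) v₀
    obtain ⟨y, hy, hEw⟩ := ih (fun i => E (g i)) (E w) fun v hv => by
      rw [LinearMap.eliminateAlong_apply_apply]
      refine h _ (Finset.forall_mem_insert _ _ _ |>.mpr ⟨?_, fun i hi => ?_⟩)
      · rw [← LinearMap.eliminateAlong_apply_apply, LinearMap.eliminateAlong_self hρ.ne,
          LinearMap.zero_apply]
      · rw [← LinearMap.eliminateAlong_apply_apply]
        exact hv i hi
    set u := ∑ i ∈ s, y i • g i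
    have hwu : w - u = ((w - u) v₀ / g a v₀) • g a := by
      refine LinearMap.eq_smul_of_eliminateAlong_eq_zero ?_
      rw [map_sub, hEw, map_sum, sub_eq_zero]
      simp only [E, map_smul]
    have hu : 0 ≤ u v₀ := by
      simp only [u, LinearMap.sum_apply, LinearMap.smul_apply, smul_eq_mul]
      exact Finset.sum_nonneg fun i hi => mul_nonneg (hy i) (hv₀ i hi)
    refine ⟨(w - u) v₀ / g a v₀, div_nonneg_of_nonpos ?_ hρ.le, y, hy, ?_⟩
    · rw [LinearMap.sub_apply]
      linarith
    · rw [← hwu, sub_add_cancel]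

variable {ι κ : Type*} [Fintype κ]

def IsLPMinimizer (G : Matrix ι κ 𝕜) (β : ι → 𝕜) (w z : κ → 𝕜) : Prop :=
  G *ᵥ z ≤ β ∧ ∀ z', G *ᵥ z' ≤ β → w ⬝ᵥ z ≤ w ⬝ᵥ z'

variable [Fintype ι] {G : Matrix ι κ 𝕜} {β : ι → 𝕜} {w z : κ → 𝕜}

theorem IsLPMinimizer.dotProduct_nonneg_of_active_le_zero (hz : IsLPMinimizer G β w z)
    (d : κ → 𝕜) (hd : ∀ i, (G *ᵥ z) i = β i → (G *ᵥ d) i ≤ 0) : 0 ≤ w ⬝ᵥ d := by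
  classical
  obtain ⟨t, ht, hstep⟩ := Finset.exists_pos_forall_mul_le
    (Finset.univ.filter fun i => (G *ᵥ z) i < β i) (G *ᵥ d) (β - G *ᵥ z)
    fun i hi => sub_pos.mpr (Finset.mem_filter.mp hi).2
  have hfeas : G *ᵥ (z + t • d) ≤ β := fun i => by
    rw [mulVec_add, mulVec_smul, Pi.add_apply, Pi.smul_apply, smul_eq_mul]
    rcases (hz.1 i).eq_or_lt with hi | hi
    · nlinarith [hd i hi]
    · linarith [hstep i (by simpa using hi), show (β - G *ᵥ z) i = β i - (G *ᵥ z) i from rfl]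
  have hle := hz.2 _ hfeas
  rw [dotProduct_add, dotProduct_smul, smul_eq_mul, le_add_iff_nonneg_right] at hle
  exact (mul_nonneg_iff_of_pos_left ht).mp hle

theorem isLPMinimizer_iff_exists_multipliers :
    IsLPMinimizer G β w z ↔ G *ᵥ z ≤ β ∧ ∃ y : ι → 𝕜, 0 ≤ y ∧
      (∀ i, y i * (β i - (G *ᵥ z) i) = 0) ∧ y ᵥ* G = -w := by
  classical
  constructor
  · intro hz
    refine ⟨hz.1, ?_⟩
    set s := Finset.univ.filter fun i => (G *ᵥ z) i = β i
    obtain ⟨y, hy, hw⟩ := farkas_exists_nonneg_sum_smul_eq s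
      (fun i => -(LinearMap.proj i ∘ₗ G.mulVecLin)) (dotProductBilin 𝕜 𝕜 w) fun d hd =>
        hz.dotProduct_nonneg_of_active_le_zero d fun i hi => by
          simpa using hd i (by simpa [s] using hi)
    refine ⟨fun i => if i ∈ s then y i else 0, fun i => ?_, fun i => ?_, ?_⟩
    · dsimp only
      split_ifs
      exacts [hy i, le_rfl]
    · dsimp only
      split_ifs with hi
      · rw [(Finset.mem_filter.mp hi).2, sub_self, mul_zero]
      · rw [zero_mul]
    · refine dotProduct_eq _ _ fun u => ?_
      have hu := LinearMap.congr_fun hw u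
      simp only [dotProductBilin_apply_apply, LinearMap.sum_apply, LinearMap.smul_apply,
        LinearMap.neg_apply, LinearMap.comp_apply, mulVecLin_apply, LinearMap.proj_apply,
        smul_neg, smul_eq_mul, Finset.sum_neg_distrib] at hu
      rw [← dotProduct_mulVec, neg_dotProduct, hu, neg_neg, dotProduct]
      simp only [ite_mul, zero_mul, Finset.sum_ite_mem, Finset.univ_inter]
  · rintro ⟨hz, y, hy, hcs, hyG⟩
    refine ⟨hz, fun z' hz' => ?_⟩
    have hw : ∀ x, w ⬝ᵥ x = -(y ⬝ᵥ (G *ᵥ x)) := fun x => by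
      rw [dotProduct_mulVec, hyG, neg_dotProduct, neg_neg]
    have hact : y ⬝ᵥ (β - G *ᵥ z) = 0 := Finset.sum_eq_zero fun i _ => hcs i
    have hle : y ⬝ᵥ (G *ᵥ z') ≤ y ⬝ᵥ β :=
      Finset.sum_le_sum fun i _ => mul_le_mul_of_nonneg_left (hz' i) (hy i)
    rw [dotProduct_sub] at hact
    rw [hw, hw]
    linarith

end OrderedField

section SplitMatrix

variable {R m n : Type*} [Ring R] [Fintype n] [DecidableEq n]

def splitMatrix (A : Matrix m n R) : Matrix (m ⊕ (n ⊕ n)) (n ⊕ n) R :=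
  fromRows (fromCols A (-A)) (-1)

theorem splitMatrix_mulVec_sumElim (A : Matrix m n R) (p q : n → R) :
    splitMatrix A *ᵥ Sum.elim p q = Sum.elim (A *ᵥ p - A *ᵥ q) (-Sum.elim p q) := by
  simp [splitMatrix, neg_mulVec, sub_eq_add_neg]

theorem splitMatrix_mulVec_le_iff [PartialOrder R] [IsOrderedRing R] (A : Matrix m n R)
    (b : m → R) (p q : n → R) :
    splitMatrix A *ᵥ Sum.elim p q ≤ Sum.elim b 0 ↔ A *ᵥ p - A *ᵥ q ≤ b ∧ 0 ≤ p ∧ 0 ≤ q := by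
  rw [splitMatrix_mulVec_sumElim, Sum.elim_le_elim_iff, neg_nonpos, ← Sum.elim_zero_zero,
    Sum.elim_le_elim_iff]

end SplitMatrix

section OrderedField

variable {𝕜 : Type*} [Field 𝕜] [LinearOrder 𝕜] [IsStrictOrderedRing 𝕜]
  {m n : Type*} [Fintype n] [DecidableEq n]

theorem isLPMinimizer_splitMatrix_iff (A : Matrix m n 𝕜) (b : m → 𝕜) (c₁ c₂ p q : n → 𝕜) :
    IsLPMinimizer (splitMatrix A) (Sum.elim b 0) (Sum.elim c₁ (-c₂)) (Sum.elim p q) ↔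
      (A *ᵥ p - A *ᵥ q ≤ b ∧ 0 ≤ p ∧ 0 ≤ q) ∧ ∀ p' q' : n → 𝕜,
        (A *ᵥ p' - A *ᵥ q' ≤ b ∧ 0 ≤ p' ∧ 0 ≤ q') → c₁ ⬝ᵥ p - c₂ ⬝ᵥ q ≤ c₁ ⬝ᵥ p' - c₂ ⬝ᵥ q' := by
  have hobj : ∀ p' q' : n → 𝕜, Sum.elim c₁ (-c₂) ⬝ᵥ Sum.elim p' q' = c₁ ⬝ᵥ p' - c₂ ⬝ᵥ q' :=
    fun p' q' => by rw [sumElim_dotProduct_sumElim, neg_dotProduct, sub_eq_add_neg]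
  rw [IsLPMinimizer, splitMatrix_mulVec_le_iff, hobj]
  refine and_congr_right fun _ => ⟨fun h p' q' hpq => ?_, fun h z' hz' => ?_⟩
  · rw [← hobj p' q']
    exact h _ ((splitMatrix_mulVec_le_iff A b p' q').mpr hpq)
  · rw [← Sum.elim_comp_inl_inr z', splitMatrix_mulVec_le_iff] at hz'
    rw [← Sum.elim_comp_inl_inr z', hobj]
    exact h _ _ hz'

theorem IsLPMinimizer.exists_of_splitMatrix [Fintype m] {A : Matrix m n 𝕜} {b : m → 𝕜}
    {c₁ c₂ p q : n → 𝕜}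
    (h : IsLPMinimizer (splitMatrix A) (Sum.elim b 0) (Sum.elim c₁ (-c₂)) (Sum.elim p q)) :
    ∃ c, c₂ ≤ c ∧ c ≤ c₁ ∧ IsLPMinimizer A b c (p - q) := by
  obtain ⟨hfeas, y, hy, hcs, hyG⟩ := isLPMinimizer_iff_exists_multipliers.mp h
  have hfeas' := (splitMatrix_mulVec_le_iff A b p q).mp hfeas
  rw [splitMatrix, vecMul_fromRows, vecMul_fromCols, vecMul_neg, vecMul_neg, vecMul_one] at hyG
  have hc₁ : ∀ j, (y ∘ Sum.inl ᵥ* A) j - y (Sum.inr (Sum.inl j)) = -c₁ j := fun j => by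
    simpa [sub_eq_add_neg] using congrFun hyG (Sum.inl j)
  have hc₂ : ∀ j, -(y ∘ Sum.inl ᵥ* A) j - y (Sum.inr (Sum.inr j)) = c₂ j := fun j => by
    simpa [sub_eq_add_neg] using congrFun hyG (Sum.inr j)
  refine ⟨-(y ∘ Sum.inl ᵥ* A), fun j => ?_, fun j => ?_, ?_⟩
  · linarith [hc₂ j, show 0 ≤ y (Sum.inr (Sum.inr j)) from hy _, Pi.neg_apply (y ∘ Sum.inl ᵥ* A) j]
  · linarith [hc₁ j, show 0 ≤ y (Sum.inr (Sum.inl j)) from hy _, Pi.neg_apply (y ∘ Sum.inl ᵥ* A) j]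
  refine isLPMinimizer_iff_exists_multipliers.mpr
    ⟨?_, y ∘ Sum.inl, fun i => hy _, fun i => ?_, (neg_neg _).symm⟩
  · rw [mulVec_sub]
    exact hfeas'.1
  · have hslack := hcs (Sum.inl i)
    rwa [splitMatrix_mulVec_sumElim, Sum.elim_inl, ← mulVec_sub] at hslack

end OrderedField

theorem weak_optimality_nonneg_substitution_backward_general (m n : ℕ) (A : Matrix (Fin m) (Fin n) ℝ)
    (bl bu : Fin m → ℝ) (cl cu : Fin n → ℝ)
    (xp xm : Fin n → ℝ)
    (hopt : ∃ (b : Fin m → ℝ) (c₁ c₂ : Fin n → ℝ),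
      bl ≤ b ∧ b ≤ bu ∧ cl ≤ c₁ ∧ c₁ ≤ cu ∧ cl ≤ c₂ ∧ c₂ ≤ cu ∧
      (A.mulVec xp - A.mulVec xm ≤ b ∧ 0 ≤ xp ∧ 0 ≤ xm) ∧
      ∀ xp' xm' : Fin n → ℝ,
        (A.mulVec xp' - A.mulVec xm' ≤ b ∧ 0 ≤ xp' ∧ 0 ≤ xm') →
        c₁ ⬝ᵥ xp - c₂ ⬝ᵥ xm ≤ c₁ ⬝ᵥ xp' - c₂ ⬝ᵥ xm') :
    ∃ (b : Fin m → ℝ) (c : Fin n → ℝ), bl ≤ b ∧ b ≤ bu ∧ cl ≤ c ∧ c ≤ cu ∧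
      A.mulVec (xp - xm) ≤ b ∧
      ∀ x' : Fin n → ℝ, A.mulVec x' ≤ b → c ⬝ᵥ (xp - xm) ≤ c ⬝ᵥ x' := by
  obtain ⟨b, c₁, c₂, hbl, hbu, hc₁l, hc₁u, hc₂l, hc₂u, hsplit⟩ := hopt
  obtain ⟨c, hc₂, hc₁, hfeas, hmin⟩ :=
    ((isLPMinimizer_splitMatrix_iff A b c₁ c₂ xp xm).mpr hsplit).exists_of_splitMatrix
  exact ⟨b, c, hbl, hbu, hc₂l.trans hc₂, hc₁.trans hc₁u, hfeas, hmin⟩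

/-- If `(x⁺, x⁻)` is weakly optimal for the transformed program
`min c₁ᵀx⁺ - c₂ᵀx⁻, Ax⁺ - Ax⁻ ≤ b, x⁺ ≥ 0, x⁻ ≥ 0` with a fixed matrix `A`, then
`x = x⁺ - x⁻` is weakly optimal for `min cᵀx, Ax ≤ b`. -/
theorem weak_optimality_nonneg_substitution_backward (m n : ℕ) (A : Matrix (Fin m) (Fin n) ℝ)
    (bl bu : Fin m → ℝ) (cl cu : Fin n → ℝ) (hb : bl ≤ bu) (hc : cl ≤ cu)
    (xp xm : Fin n → ℝ)
    (hopt : ∃ (b : Fin m → ℝ) (c₁ c₂ : Fin n → ℝ),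
      bl ≤ b ∧ b ≤ bu ∧ cl ≤ c₁ ∧ c₁ ≤ cu ∧ cl ≤ c₂ ∧ c₂ ≤ cu ∧
      (A.mulVec xp - A.mulVec xm ≤ b ∧ 0 ≤ xp ∧ 0 ≤ xm) ∧
      ∀ xp' xm' : Fin n → ℝ,
        (A.mulVec xp' - A.mulVec xm' ≤ b ∧ 0 ≤ xp' ∧ 0 ≤ xm') →
        c₁ ⬝ᵥ xp - c₂ ⬝ᵥ xm ≤ c₁ ⬝ᵥ xp' - c₂ ⬝ᵥ xm') :
    ∃ (b : Fin m → ℝ) (c : Fin n → ℝ), bl ≤ b ∧ b ≤ bu ∧ cl ≤ c ∧ c ≤ cu ∧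
      A.mulVec (xp - xm) ≤ b ∧
      ∀ x' : Fin n → ℝ, A.mulVec x' ≤ b → c ⬝ᵥ (xp - xm) ≤ c ⬝ᵥ x' :=
  weak_optimality_nonneg_substitution_backward_general m n A bl bu cl cu xp xm hopt
end

section
/- Let 𝐀 = [A̲, Ā] ⊆ ℝ^{m×n} be an interval matrix and 𝐛 = [b̲, b̄] ⊆ ℝᵐ, 𝐜 = [c̲, c̄] ⊆ ℝⁿ interval vectors, and set c_c = (c̄ + c̲)/2, c_Δ = (c̄ − c̲)/2. For the interval linear program min c⊤x subject to Ax ≤ b (with A ∈ 𝐀, b ∈ 𝐛, c ∈ 𝐜), the best optimal value f̲ — i.e., the infimum over all scenarios (A, b, c) of the optimal value of the scenario, computed in the extended reals with +∞ for infeasible scenarios — equals the infimum of c_c⊤x − c_Δ⊤|x| over the weakly feasible set M = {x ∈ ℝⁿ : ∃A ∈ 𝐀, ∃b ∈ 𝐛, Ax ≤ b}, where |x| denotes the entrywise absolute value. -/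
open Matrix

lemma term_le {cl cu c x : ℝ} (h1 : cl ≤ c) (h2 : c ≤ cu) :
    (cu + cl) / 2 * x - (cu - cl) / 2 * |x| ≤ c * x := by
  rcases le_or_gt 0 x with hx | hx
  · rw [abs_of_nonneg hx]; nlinarith
  · rw [abs_of_neg hx]; nlinarith

lemma opt_c_eq (cl cu x : ℝ) :
    (if 0 ≤ x then cl else cu) * x = (cu + cl) / 2 * x - (cu - cl) / 2 * |x| := by
  rcases le_or_gt 0 x with hx | hx
  · rw [if_pos hx, abs_of_nonneg hx]; ring
  · rw [if_neg (not_le.2 hx), abs_of_neg hx]; ring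

/-- The best optimal value of the interval program `min cᵀx, Ax ≤ b` equals the infimum
of `c_cᵀx - c_Δᵀ|x|` over the weakly feasible set. -/
theorem best_value_formula (m n : ℕ) (Al Au : Matrix (Fin m) (Fin n) ℝ)
    (bl bu : Fin m → ℝ) (cl cu : Fin n → ℝ)
    (hA : matLE Al Au) (hb : bl ≤ bu) (hc : cl ≤ cu) :
    (⨅ A : {A : Matrix (Fin m) (Fin n) ℝ // matLE Al A ∧ matLE A Au},
     ⨅ b : {b : Fin m → ℝ // bl ≤ b ∧ b ≤ bu},
     ⨅ c : {c : Fin n → ℝ // cl ≤ c ∧ c ≤ cu},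
     ⨅ x : {x : Fin n → ℝ // A.1.mulVec x ≤ b.1},
       ((c.1 ⬝ᵥ x.1 : ℝ) : EReal)) =
    ⨅ x : {x : Fin n → ℝ // ∃ (A : Matrix (Fin m) (Fin n) ℝ) (b : Fin m → ℝ),
        matLE Al A ∧ matLE A Au ∧ bl ≤ b ∧ b ≤ bu ∧ A.mulVec x ≤ b},
      ((((cu + cl) / 2) ⬝ᵥ x.1 - ((cu - cl) / 2) ⬝ᵥ (fun i => |x.1 i|) : ℝ) : EReal) := by
  apply le_antisymm
  · apply le_iInf
    rintro ⟨x, A, b, hAl, hAu, hbl, hbu, hx⟩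
    refine iInf_le_of_le ⟨A, hAl, hAu⟩ ?_
    refine iInf_le_of_le ⟨b, hbl, hbu⟩ ?_
    refine iInf_le_of_le ⟨fun i => if 0 ≤ x i then cl i else cu i, ?_, ?_⟩ ?_
    · intro i; dsimp only; split <;> [exact le_refl _; exact hc i]
    · intro i; dsimp only; split <;> [exact hc i; exact le_refl _]
    refine iInf_le_of_le ⟨x, hx⟩ ?_
    apply EReal.coe_le_coe_iff.2
    apply le_of_eq
    simp only [dotProduct, Pi.add_apply, Pi.sub_apply, Pi.div_apply,
      ← Finset.sum_sub_distrib]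
    exact Finset.sum_congr rfl fun i _ => opt_c_eq (cl i) (cu i) (x i)
  · refine le_iInf fun A => le_iInf fun b => le_iInf fun c => le_iInf fun x => ?_
    obtain ⟨A, hAl, hAu⟩ := A
    obtain ⟨b, hbl, hbu⟩ := b
    obtain ⟨c, hcl, hcu⟩ := c
    obtain ⟨x, hx⟩ := x
    refine iInf_le_of_le ⟨x, A, b, hAl, hAu, hbl, hbu, hx⟩ ?_
    apply EReal.coe_le_coe_iff.2
    simp only [dotProduct, Pi.add_apply, Pi.sub_apply, Pi.div_apply,
      ← Finset.sum_sub_distrib]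
    exact Finset.sum_le_sum fun i _ => term_le (hcl i) (hcu i)
end

section
/- Let 𝐀 = [A̲, Ā] ⊆ ℝ^{m×n} be an interval matrix and 𝐛 = [b̲, b̄] ⊆ ℝᵐ, 𝐜 = [c̲, c̄] ⊆ ℝⁿ interval vectors, and set b_c = (b̄ + b̲)/2, b_Δ = (b̄ − b̲)/2. Consider the interval linear program min c⊤x subject to Ax ≤ b (with A ∈ 𝐀, b ∈ 𝐛, c ∈ 𝐜) and let f̄ be its worst optimal value, i.e., the supremum over all scenarios of the scenario's optimal value in the extended reals (+∞ for infeasible scenarios). If f̄ < ∞, then f̄ equals the supremum of b_c⊤y + b_Δ⊤|y| over the weakly feasible set of the dual, N = {y ∈ ℝᵐ : y ≤ 0 and ∃A ∈ 𝐀, ∃c ∈ 𝐜, A⊤y = c}, where |y| denotes the entrywise absolute value. -/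
/-!
Since `f̄ < ∞`, every scenario is feasible, so by LP strong duality its optimal value is the
supremum of `bᵀy` over `y ≤ 0` with `Aᵀy = c`; strong duality comes from Farkas' lemma, proved by
eliminating the generators one at a time. For `y ≤ 0` the objective `b_cᵀy + b_Δᵀ|y|` equals
`b̲ᵀy = max {bᵀy : b ∈ 𝐛}`, so both sides are the supremum of `b̲ᵀy` over the scenarios `(A, c)`
and their dual feasible points `y`.
-/

open Matrix

section Farkas

variable {ι ρ : Type*} [Fintype ρ]

lemma sub_smul_dotProduct_eq_dotProduct_sub_smul (w y u v : ρ → ℝ) (d : ℝ) :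
    (w - (w ⬝ᵥ u / d) • y) ⬝ᵥ v = w ⬝ᵥ (v - (y ⬝ᵥ v / d) • u) := by
  simp only [sub_dotProduct, dotProduct_sub, smul_dotProduct, dotProduct_smul, smul_eq_mul]
  ring

theorem exists_nonneg_sum_smul_eq_or_exists_separating (s : Finset ι) (a : ι → ρ → ℝ)
    (b : ρ → ℝ) :
    (∃ t : ι → ℝ, 0 ≤ t ∧ ∑ i ∈ s, t i • a i = b) ∨
      ∃ y : ρ → ℝ, (∀ i ∈ s, 0 ≤ y ⬝ᵥ a i) ∧ y ⬝ᵥ b < 0 := by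
  classical
  induction s using Finset.induction_on generalizing a b with
  | empty =>
    by_cases hb : b = 0
    · exact .inl ⟨0, le_rfl, by simp [hb]⟩
    · refine .inr ⟨-b, by simp, ?_⟩
      rw [neg_dotProduct, neg_lt_zero]
      exact (Finset.sum_nonneg fun i _ => mul_self_nonneg (b i)).lt_of_ne
        (Ne.symm (dotProduct_self_eq_zero.not.2 hb))
  | insert j s hj ih =>
    have sum_insert_update (t : ι → ℝ) (μ : ℝ) :
        ∑ i ∈ insert j s, Function.update t j μ i • a i = μ • a j + ∑ i ∈ s, t i • a i := by
      rw [Finset.sum_insert hj, Function.update_self]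
      congr 1
      exact Finset.sum_congr rfl fun i hi =>
        by rw [Function.update_of_ne (ne_of_mem_of_not_mem hi hj)]
    rcases ih a b with ⟨t, ht, hsum⟩ | ⟨y, hy, hyb⟩
    · refine .inl ⟨Function.update t j 0, ?_, by rw [sum_insert_update, zero_smul, zero_add, hsum]⟩
      exact le_update_iff.2 ⟨le_rfl, fun i _ => ht i⟩
    by_cases hyj : 0 ≤ y ⬝ᵥ a j
    · exact .inr ⟨y, (Finset.forall_mem_insert _ _ _).2 ⟨hyj, hy⟩, hyb⟩
    -- Project along `a j` onto the hyperplane `y ⊥` and eliminate the generator `a j`.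
    set d := y ⬝ᵥ a j
    have hd : d < 0 := not_le.1 hyj
    rcases ih (fun i => a i - (y ⬝ᵥ a i / d) • a j) (b - (y ⬝ᵥ b / d) • a j) with
      ⟨t, ht, hsum⟩ | ⟨w, hw, hwb⟩
    · set μ := y ⬝ᵥ b / d - ∑ i ∈ s, t i * (y ⬝ᵥ a i / d)
      have hμ : 0 ≤ μ := by
        have hyb' : 0 ≤ y ⬝ᵥ b / d := (div_pos_of_neg_of_neg hyb hd).le
        have hsum' : ∑ i ∈ s, t i * (y ⬝ᵥ a i / d) ≤ 0 := Finset.sum_nonpos fun i hi =>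
          mul_nonpos_of_nonneg_of_nonpos (ht i) (div_nonpos_of_nonneg_of_nonpos (hy i hi) hd.le)
        linarith
      refine .inl ⟨Function.update t j μ, le_update_iff.2 ⟨hμ, fun i _ => ht i⟩, ?_⟩
      simp only [smul_sub, smul_smul, Finset.sum_sub_distrib, ← Finset.sum_smul] at hsum
      rw [sum_insert_update]
      linear_combination (norm := module) hsum
    · refine .inr ⟨w - (w ⬝ᵥ a j / d) • y, (Finset.forall_mem_insert _ _ _).2 ⟨?_, ?_⟩, ?_⟩
      · rw [sub_dotProduct, smul_dotProduct, smul_eq_mul, div_mul_cancel₀ _ hd.ne, sub_self]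
      · exact fun i hi => by rw [sub_smul_dotProduct_eq_dotProduct_sub_smul]; exact hw i hi
      · rwa [sub_smul_dotProduct_eq_dotProduct_sub_smul]

end Farkas

namespace Matrix

variable {ι ρ : Type*} [Fintype ι] [Fintype ρ]

theorem exists_nonneg_mulVec_eq_or_exists_separating (M : Matrix ρ ι ℝ) (b : ρ → ℝ) :
    (∃ t : ι → ℝ, 0 ≤ t ∧ M *ᵥ t = b) ∨ ∃ y : ρ → ℝ, 0 ≤ y ᵥ* M ∧ y ⬝ᵥ b < 0 := by
  have hcols (t : ι → ℝ) : M *ᵥ t = ∑ i, t i • Mᵀ i := by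
    ext r
    simp [mulVec, dotProduct, Finset.sum_apply, mul_comm]
  rcases exists_nonneg_sum_smul_eq_or_exists_separating Finset.univ (fun i => Mᵀ i) b with
    ⟨t, ht, hsum⟩ | ⟨y, hy, hyb⟩
  · exact .inl ⟨t, ht, (hcols t).trans hsum⟩
  · exact .inr ⟨y, fun i => hy i (Finset.mem_univ i), hyb⟩

theorem exists_nonneg_vecMul_eq_zero_of_not_exists_mulVec_le (A : Matrix ρ ι ℝ) (b : ρ → ℝ)
    (h : ¬∃ x, A *ᵥ x ≤ b) : ∃ u : ρ → ℝ, 0 ≤ u ∧ u ᵥ* A = 0 ∧ u ⬝ᵥ b < 0 := by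
  classical
  rcases exists_nonneg_mulVec_eq_or_exists_separating
      (fromCols (fromCols A (-A)) (1 : Matrix ρ ρ ℝ)) b with ⟨t, ht, hb⟩ | ⟨u, hu, hub⟩
  · refine absurd ⟨t ∘ Sum.inl ∘ Sum.inl - t ∘ Sum.inl ∘ Sum.inr, ?_⟩ h
    rw [← hb]
    simp only [fromCols_mulVec, neg_mulVec, one_mulVec, mulVec_sub, Function.comp_assoc]
    exact le_add_of_nonneg_right fun _ => ht _
  · rw [vecMul_fromCols, vecMul_fromCols, vecMul_neg, vecMul_one, ← Sum.elim_zero_zero,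
      ← Sum.elim_zero_zero, Sum.elim_le_elim_iff, Sum.elim_le_elim_iff] at hu
    obtain ⟨⟨huA, huA'⟩, hu⟩ := hu
    exact ⟨u, hu, le_antisymm (neg_nonneg.1 huA') huA, hub⟩

lemma dotProduct_le_dotProduct_of_nonpos_right {u v w : ρ → ℝ} (huv : u ≤ v) (hw : w ≤ 0) :
    v ⬝ᵥ w ≤ u ⬝ᵥ w := by
  simpa using dotProduct_le_dotProduct_of_nonneg_right huv (neg_nonneg.2 hw)

theorem dotProduct_le_dotProduct_of_dual_feasible {A : Matrix ρ ι ℝ} {b : ρ → ℝ} {c x : ι → ℝ}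
    {y : ρ → ℝ} (hx : A *ᵥ x ≤ b) (hy : y ≤ 0) (hAy : Aᵀ *ᵥ y = c) : b ⬝ᵥ y ≤ c ⬝ᵥ x := by
  calc b ⬝ᵥ y ≤ (A *ᵥ x) ⬝ᵥ y := dotProduct_le_dotProduct_of_nonpos_right hx hy
    _ = c ⬝ᵥ x := by rw [dotProduct_comm, dotProduct_mulVec, ← hAy, mulVec_transpose]

theorem exists_dual_feasible_le_dotProduct {A : Matrix ρ ι ℝ} {b : ρ → ℝ} {c x₀ : ι → ℝ}
    (hx₀ : A *ᵥ x₀ ≤ b) {r : ℝ} (hr : ∀ x, A *ᵥ x ≤ b → r < c ⬝ᵥ x) :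
    ∃ y : ρ → ℝ, y ≤ 0 ∧ Aᵀ *ᵥ y = c ∧ r ≤ b ⬝ᵥ y := by
  obtain ⟨u, hu, huA, hub⟩ :=
    (fromRows A (replicateRow Unit c)).exists_nonneg_vecMul_eq_zero_of_not_exists_mulVec_le
      (Sum.elim b fun _ => r) fun ⟨x, hx⟩ => by
        rw [fromRows_mulVec, Sum.elim_le_elim_iff] at hx
        exact (hr x hx.1).not_ge (hx.2 ())
  set v := u ∘ Sum.inl
  set t := u (Sum.inr ())
  have hvA : v ᵥ* A = -(t • c) := by
    rw [vecMul_fromRows] at huA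
    rw [eq_neg_iff_add_eq_zero, ← huA]
    congr 1
    ext j
    simp [vecMul, dotProduct, t]
  have hvb : v ⬝ᵥ b + t * r < 0 := by
    simpa [dotProduct, Fintype.sum_sum_type, v, t] using hub
  rcases (show 0 ≤ t from hu _).eq_or_lt with ht | ht
  · -- A certificate with `t = 0` would already refute the feasibility of `x₀`.
    rw [← ht, zero_smul, neg_zero] at hvA
    have : v ⬝ᵥ (A *ᵥ x₀) ≤ v ⬝ᵥ b := dotProduct_le_dotProduct_of_nonneg_left hx₀ fun i => hu _
    rw [dotProduct_mulVec, hvA, zero_dotProduct] at this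
    rw [← ht, zero_mul, add_zero] at hvb
    linarith
  · refine ⟨-t⁻¹ • v, fun i => ?_, ?_, ?_⟩
    · exact mul_nonpos_of_nonpos_of_nonneg (neg_nonpos.2 (inv_nonneg.2 ht.le)) (hu _)
    · rw [mulVec_transpose, smul_vecMul, hvA, smul_neg, neg_smul, neg_neg, smul_smul,
        inv_mul_cancel₀ ht.ne', one_smul]
    · rw [dotProduct_smul, smul_eq_mul, dotProduct_comm, neg_mul, le_neg, ← div_eq_inv_mul,
        div_le_iff₀ ht]
      linarith

end Matrix

section LinearProgram

variable {ι ρ : Type*} [Fintype ι]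

noncomputable def lpValue (A : Matrix ρ ι ℝ) (b : ρ → ℝ) (c : ι → ℝ) : EReal :=
  ⨅ x : {x : ι → ℝ // A *ᵥ x ≤ b}, ((c ⬝ᵥ x.1 : ℝ) : EReal)

lemma lpValue_le_of_mulVec_le {A : Matrix ρ ι ℝ} {b : ρ → ℝ} {c x : ι → ℝ} (hx : A *ᵥ x ≤ b) :
    lpValue A b c ≤ ((c ⬝ᵥ x : ℝ) : EReal) :=
  iInf_le (fun x : {x : ι → ℝ // A *ᵥ x ≤ b} => ((c ⬝ᵥ x.1 : ℝ) : EReal)) ⟨x, hx⟩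

lemma lpValue_lt_top_iff {A : Matrix ρ ι ℝ} {b : ρ → ℝ} {c : ι → ℝ} :
    lpValue A b c < ⊤ ↔ ∃ x, A *ᵥ x ≤ b := by
  refine ⟨fun h => ?_, fun ⟨x, hx⟩ => (lpValue_le_of_mulVec_le hx).trans_lt (EReal.coe_lt_top _)⟩
  by_contra hne
  have : IsEmpty {x : ι → ℝ // A *ᵥ x ≤ b} := ⟨fun x => hne ⟨x.1, x.2⟩⟩
  rw [lpValue, iInf_of_empty] at h
  exact h.false

lemma coe_dotProduct_le_lpValue [Fintype ρ] {A : Matrix ρ ι ℝ} {b : ρ → ℝ} {c : ι → ℝ}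
    {y : ρ → ℝ} (hy : y ≤ 0) (hAy : Aᵀ *ᵥ y = c) : ((b ⬝ᵥ y : ℝ) : EReal) ≤ lpValue A b c :=
  le_iInf fun x => EReal.coe_le_coe_iff.2 (dotProduct_le_dotProduct_of_dual_feasible x.2 hy hAy)

theorem lpValue_eq_iSup_dual [Fintype ρ] {A : Matrix ρ ι ℝ} {b : ρ → ℝ} {c : ι → ℝ}
    (hfeas : ∃ x, A *ᵥ x ≤ b) :
    lpValue A b c = ⨆ y : {y : ρ → ℝ // y ≤ 0 ∧ Aᵀ *ᵥ y = c}, ((b ⬝ᵥ y.1 : ℝ) : EReal) := by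
  refine le_antisymm (le_of_forall_lt fun z hz => ?_)
    (iSup_le fun y => coe_dotProduct_le_lpValue y.2.1 y.2.2)
  obtain ⟨r, hzr, hr⟩ := EReal.exists_between_coe_real hz
  obtain ⟨x₀, hx₀⟩ := hfeas
  obtain ⟨y, hy, hAy, hry⟩ := exists_dual_feasible_le_dotProduct hx₀ fun x hx =>
    EReal.coe_lt_coe_iff.1 (hr.trans_le (lpValue_le_of_mulVec_le hx))
  refine hzr.trans_le ?_
  exact le_iSup_of_le (⟨y, hy, hAy⟩ : {y : ρ → ℝ // y ≤ 0 ∧ Aᵀ *ᵥ y = c})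
    (EReal.coe_le_coe_iff.2 hry)

end LinearProgram

-- For `y ≤ 0`, the objective is `max {bᵀy : b̲ ≤ b ≤ b̄} = b̲ᵀy`.
lemma center_dotProduct_add_radius_dotProduct_abs {ρ : Type*} [Fintype ρ] (bl bu : ρ → ℝ)
    {y : ρ → ℝ} (hy : y ≤ 0) :
    ((bu + bl) / 2) ⬝ᵥ y + ((bu - bl) / 2) ⬝ᵥ (fun i => |y i|) = bl ⬝ᵥ y := by
  simp only [dotProduct, ← Finset.sum_add_distrib, abs_of_nonpos (hy _)]
  refine Finset.sum_congr rfl fun i _ => ?_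
  simp only [Pi.div_apply, Pi.add_apply, Pi.sub_apply, Pi.ofNat_apply]
  ring

theorem worst_value_formula_general (m n : ℕ) (Al Au : Matrix (Fin m) (Fin n) ℝ)
    (bl bu : Fin m → ℝ) (cl cu : Fin n → ℝ)
    (hb : bl ≤ bu)
    (hfin : (⨆ A : {A : Matrix (Fin m) (Fin n) ℝ // matLE Al A ∧ matLE A Au},
             ⨆ b : {b : Fin m → ℝ // bl ≤ b ∧ b ≤ bu},
             ⨆ c : {c : Fin n → ℝ // cl ≤ c ∧ c ≤ cu},
             ⨅ x : {x : Fin n → ℝ // A.1.mulVec x ≤ b.1},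
               ((c.1 ⬝ᵥ x.1 : ℝ) : EReal)) < ⊤) :
    (⨆ A : {A : Matrix (Fin m) (Fin n) ℝ // matLE Al A ∧ matLE A Au},
     ⨆ b : {b : Fin m → ℝ // bl ≤ b ∧ b ≤ bu},
     ⨆ c : {c : Fin n → ℝ // cl ≤ c ∧ c ≤ cu},
     ⨅ x : {x : Fin n → ℝ // A.1.mulVec x ≤ b.1},
       ((c.1 ⬝ᵥ x.1 : ℝ) : EReal)) =
    ⨆ y : {y : Fin m → ℝ // y ≤ 0 ∧ ∃ (A : Matrix (Fin m) (Fin n) ℝ) (c : Fin n → ℝ),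
        matLE Al A ∧ matLE A Au ∧ cl ≤ c ∧ c ≤ cu ∧ Aᵀ.mulVec y = c},
      ((((bu + bl) / 2) ⬝ᵥ y.1 + ((bu - bl) / 2) ⬝ᵥ (fun i => |y.1 i|) : ℝ) : EReal) := by
  refine le_antisymm (iSup₂_le fun A b => iSup_le fun c => ?_) (iSup_le fun y => ?_)
  · change lpValue A.1 b.1 c.1 ≤ _
    have hfeas : ∃ x, A.1 *ᵥ x ≤ b.1 :=
      lpValue_lt_top_iff.1 <| (le_iSup₂_of_le A b <|
        le_iSup (fun c : {c : Fin n → ℝ // cl ≤ c ∧ c ≤ cu} => lpValue A.1 b.1 c.1) c).trans_lt hfin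
    rw [lpValue_eq_iSup_dual hfeas]
    refine iSup_le fun y =>
      le_iSup_of_le ⟨y.1, y.2.1, A.1, c.1, A.2.1, A.2.2, c.2.1, c.2.2, y.2.2⟩ ?_
    rw [center_dotProduct_add_radius_dotProduct_abs bl bu y.2.1, EReal.coe_le_coe_iff]
    exact dotProduct_le_dotProduct_of_nonpos_right b.2.1 y.2.1
  · obtain ⟨hy, A, c, hAl, hAu, hcl, hcu, hAy⟩ := y.2
    rw [center_dotProduct_add_radius_dotProduct_abs bl bu hy]
    refine (coe_dotProduct_le_lpValue hy hAy).trans ?_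
    exact le_iSup₂_of_le ⟨A, hAl, hAu⟩ ⟨bl, le_rfl, hb⟩ (le_iSup_of_le ⟨c, hcl, hcu⟩ le_rfl)

/-- If the worst optimal value of the interval program `min cᵀx, Ax ≤ b` is finite, then
it equals the supremum of `b_cᵀy + b_Δᵀ|y|` over the weakly feasible set of the dual. -/
theorem worst_value_formula (m n : ℕ) (Al Au : Matrix (Fin m) (Fin n) ℝ)
    (bl bu : Fin m → ℝ) (cl cu : Fin n → ℝ)
    (hA : matLE Al Au) (hb : bl ≤ bu) (hc : cl ≤ cu)
    (hfin : (⨆ A : {A : Matrix (Fin m) (Fin n) ℝ // matLE Al A ∧ matLE A Au},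
             ⨆ b : {b : Fin m → ℝ // bl ≤ b ∧ b ≤ bu},
             ⨆ c : {c : Fin n → ℝ // cl ≤ c ∧ c ≤ cu},
             ⨅ x : {x : Fin n → ℝ // A.1.mulVec x ≤ b.1},
               ((c.1 ⬝ᵥ x.1 : ℝ) : EReal)) < ⊤) :
    (⨆ A : {A : Matrix (Fin m) (Fin n) ℝ // matLE Al A ∧ matLE A Au},
     ⨆ b : {b : Fin m → ℝ // bl ≤ b ∧ b ≤ bu},
     ⨆ c : {c : Fin n → ℝ // cl ≤ c ∧ c ≤ cu},
     ⨅ x : {x : Fin n → ℝ // A.1.mulVec x ≤ b.1},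
       ((c.1 ⬝ᵥ x.1 : ℝ) : EReal)) =
    ⨆ y : {y : Fin m → ℝ // y ≤ 0 ∧ ∃ (A : Matrix (Fin m) (Fin n) ℝ) (c : Fin n → ℝ),
        matLE Al A ∧ matLE A Au ∧ cl ≤ c ∧ c ≤ cu ∧ Aᵀ.mulVec y = c},
      ((((bu + bl) / 2) ⬝ᵥ y.1 + ((bu - bl) / 2) ⬝ᵥ (fun i => |y.1 i|) : ℝ) : EReal) :=
  worst_value_formula_general m n Al Au bl bu cl cu hb hfin
end

section
/- Let 𝐀 ⊆ ℝ^{m×n} be an interval matrix and 𝐛 ⊆ ℝᵐ, 𝐜 ⊆ ℝⁿ interval vectors. The best optimal value f̲ (infimum over all scenarios of the scenario's optimal value, in the extended reals with +∞ for infeasible scenarios) of the interval linear program min c⊤x subject to Ax = b, x ≥ 0 (with A ∈ 𝐀, b ∈ 𝐛, c ∈ 𝐜) is equal to the best optimal value of the split interval linear program min c⊤x subject to A₁x ≤ b₁, A₂x ≥ b₂, x ≥ 0, where A₁, A₂ ∈ 𝐀 and b₁, b₂ ∈ 𝐛 are chosen independently and c ∈ 𝐜. -/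
open Matrix

lemma mulVec_mono {m n : ℕ} {A B : Matrix (Fin m) (Fin n) ℝ} {x : Fin n → ℝ}
    (hAB : matLE A B) (hx : 0 ≤ x) : A.mulVec x ≤ B.mulVec x := by
  intro i
  simp only [Matrix.mulVec, dotProduct]
  refine Finset.sum_le_sum fun j _ => ?_
  exact mul_le_mul_of_nonneg_right (hAB i j) (hx j)

lemma construct {m n : ℕ} (Al Au : Matrix (Fin m) (Fin n) ℝ) (hA : matLE Al Au)
    (x : Fin n → ℝ) (hx : 0 ≤ x) (y : Fin m → ℝ)
    (h1 : Al.mulVec x ≤ y) (h2 : y ≤ Au.mulVec x) :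
    ∃ A, matLE Al A ∧ matLE A Au ∧ A.mulVec x = y := by
  set u := Al.mulVec x with hu
  set v := Au.mulVec x with hv
  have huv : u ≤ v := mulVec_mono hA hx
  set t : Fin m → ℝ := fun i => if u i < v i then (y i - u i) / (v i - u i) else 0 with ht
  have ht0 : ∀ i, 0 ≤ t i := by
    intro i
    simp only [ht]
    split
    · exact div_nonneg (by linarith [h1 i]) (by linarith [‹u i < v i›])
    · exact le_refl 0
  have ht1 : ∀ i, t i ≤ 1 := by
    intro i
    simp only [ht]
    split
    · rw [div_le_one (by linarith [‹u i < v i›])]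
      linarith [h2 i]
    · exact zero_le_one
  refine ⟨Matrix.of fun i j => Al i j + t i * (Au i j - Al i j), ?_, ?_, ?_⟩
  · intro i j
    simp only [Matrix.of_apply]
    nlinarith [ht0 i, hA i j]
  · intro i j
    simp only [Matrix.of_apply]
    nlinarith [ht1 i, hA i j]
  · funext i
    have hsum : (Matrix.of fun i j => Al i j + t i * (Au i j - Al i j)).mulVec x i
        = u i + t i * (v i - u i) := by
      simp only [Matrix.mulVec, dotProduct, Matrix.of_apply, hu, hv]
      rw [Finset.sum_congr rfl (fun j _ => by ring :
        ∀ j ∈ Finset.univ, (Al i j + t i * (Au i j - Al i j)) * x j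
          = Al i j * x j + t i * (Au i j * x j) - t i * (Al i j * x j))]
      rw [Finset.sum_sub_distrib, Finset.sum_add_distrib, ← Finset.mul_sum, ← Finset.mul_sum]
      ring
    rw [hsum]
    by_cases h : u i < v i
    · simp only [ht, if_pos h]
      field_simp
      rw [mul_div_assoc, div_self (ne_of_gt (by linarith : (0:ℝ) < v i - u i))]
      ring
    · have heq : u i = v i := le_antisymm (huv i) (not_lt.mp h)
      have : y i = u i := le_antisymm (heq ▸ h2 i) (h1 i)
      simp only [ht, if_neg h]
      linarith

/-- Splitting interval equations into two opposite interval inequalities does not change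
the best optimal value of a minimization ILP. -/
theorem best_value_split (m n : ℕ) (Al Au : Matrix (Fin m) (Fin n) ℝ)
    (bl bu : Fin m → ℝ) (cl cu : Fin n → ℝ)
    (hA : matLE Al Au) (hb : bl ≤ bu) (hc : cl ≤ cu) :
    (⨅ A : {A : Matrix (Fin m) (Fin n) ℝ // matLE Al A ∧ matLE A Au},
     ⨅ b : {b : Fin m → ℝ // bl ≤ b ∧ b ≤ bu},
     ⨅ c : {c : Fin n → ℝ // cl ≤ c ∧ c ≤ cu},
     ⨅ x : {x : Fin n → ℝ // A.1.mulVec x = b.1 ∧ 0 ≤ x},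
       ((c.1 ⬝ᵥ x.1 : ℝ) : EReal)) =
    (⨅ A₁ : {A : Matrix (Fin m) (Fin n) ℝ // matLE Al A ∧ matLE A Au},
     ⨅ A₂ : {A : Matrix (Fin m) (Fin n) ℝ // matLE Al A ∧ matLE A Au},
     ⨅ b₁ : {b : Fin m → ℝ // bl ≤ b ∧ b ≤ bu},
     ⨅ b₂ : {b : Fin m → ℝ // bl ≤ b ∧ b ≤ bu},
     ⨅ c : {c : Fin n → ℝ // cl ≤ c ∧ c ≤ cu},
     ⨅ x : {x : Fin n → ℝ // A₁.1.mulVec x ≤ b₁.1 ∧ b₂.1 ≤ A₂.1.mulVec x ∧ 0 ≤ x},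
       ((c.1 ⬝ᵥ x.1 : ℝ) : EReal)) := by
  apply le_antisymm
  · refine le_iInf fun A₁ => le_iInf fun A₂ => le_iInf fun b₁ => le_iInf fun b₂ =>
      le_iInf fun c => le_iInf fun x => ?_
    obtain ⟨hxb₁, hxb₂, hx0⟩ := x.2
    set y : Fin m → ℝ := fun i => max (Al.mulVec x.1 i) (bl i) with hy
    have hy1 : Al.mulVec x.1 ≤ y := fun i => le_max_left _ _
    have hy2 : y ≤ Au.mulVec x.1 := fun i => max_le
      ((mulVec_mono hA hx0) i)
      (le_trans (b₂.2.1 i) (le_trans (hxb₂ i) ((mulVec_mono A₂.2.2 hx0) i)))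
    have hybl : bl ≤ y := fun i => le_max_right _ _
    have hybu : y ≤ bu := fun i => max_le
      (le_trans ((mulVec_mono A₁.2.1 hx0) i) (le_trans (hxb₁ i) (b₁.2.2 i)))
      (hb i)
    obtain ⟨A, hA1, hA2, hAx⟩ := construct Al Au hA x.1 hx0 y hy1 hy2
    refine iInf_le_of_le ⟨A, hA1, hA2⟩ (iInf_le_of_le ⟨y, hybl, hybu⟩
      (iInf_le_of_le c (iInf_le_of_le ⟨x.1, hAx, hx0⟩ (le_refl _))))
  · refine le_iInf fun A => le_iInf fun b => le_iInf fun c => le_iInf fun x => ?_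
    exact iInf_le_of_le A (iInf_le_of_le A (iInf_le_of_le b (iInf_le_of_le b
      (iInf_le_of_le c (iInf_le_of_le ⟨x.1, le_of_eq x.2.1, le_of_eq x.2.1.symm, x.2.2⟩
        (le_refl _))))))
end

section
/- Let 𝐀 ⊆ ℝ^{m×n} be an interval matrix and 𝐛 ⊆ ℝᵐ, 𝐜 ⊆ ℝⁿ interval vectors, and consider the interval linear program min c⊤x subject to Ax = b, x ≥ 0 (with A ∈ 𝐀, b ∈ 𝐛, c ∈ 𝐜). The program is strongly feasible (i.e., for every A ∈ 𝐀 and b ∈ 𝐛 there exists x ≥ 0 with Ax = b) if and only if its worst optimal value f̄ — the supremum over all scenarios of the scenario's optimal value in the extended reals, with +∞ for infeasible scenarios — satisfies f̄ < ∞. -/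
/-!
Feasibility of the `2 ^ m` vertex scenarios, in which each row `i` of `A` sits at its lower bound
and `b i` at its upper bound or vice versa, already forces feasibility of every scenario: for a
vertex solution `x_s ≥ 0` the row `i` of `A x_s` lies on the same side of `b i` as in the vertex
scenario, so the closed convex set `A (conv {x_s})` meets every orthant around `b`, hence contains
`b`. Every scenario then has a feasible point in `conv {x_s}`, where `cᵀx ≤ max_s cuᵀx_s`.
Conversely, an infeasible scenario has optimal value `⊤`.
-/

open Matrix

theorem Convex.mem_of_meets_every_orthant {ι : Type*} [Fintype ι] {C : Set (ι → ℝ)}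
    (hC : Convex ℝ C) (hC' : IsClosed C) {b : ι → ℝ}
    (h : ∀ s : ι → Bool, ∃ z ∈ C, ∀ i, if s i then b i ≤ z i else z i ≤ b i) : b ∈ C := by
  classical
  by_contra hb
  obtain ⟨f, u, hfb, hfC⟩ := geometric_hahn_banach_point_closed hC hC' hb
  -- Choosing the orthant by the signs of the coefficients of `f` makes `f (z - b) ≤ 0`.
  set y : ι → ℝ := fun i => f fun j => if i = j then 1 else 0
  obtain ⟨z, hzC, hz⟩ := h fun i => decide (y i ≤ 0)
  have hfzb : f (z - b) ≤ 0 := by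
    rw [← f.coe_coe, LinearMap.pi_apply_eq_sum_univ]
    refine Finset.sum_nonpos fun i _ => ?_
    have hzi := hz i
    by_cases hyi : y i ≤ 0
    · simp only [hyi, decide_true, if_true] at hzi
      exact mul_nonpos_of_nonneg_of_nonpos (sub_nonneg.2 hzi) hyi
    · simp only [hyi, decide_false, Bool.false_eq_true, if_false] at hzi
      exact mul_nonpos_of_nonpos_of_nonneg (sub_nonpos.2 hzi) (le_of_not_ge hyi)
  rw [map_sub, sub_nonpos] at hfzb
  exact (hfC z hzC).not_ge (hfzb.trans hfb.le)

section IntervalScenarios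

variable {m n : ℕ}

theorem mulVec_le_mulVec_of_matLE {A B : Matrix (Fin m) (Fin n) ℝ} (hAB : matLE A B)
    {x : Fin n → ℝ} (hx : 0 ≤ x) : A *ᵥ x ≤ B *ᵥ x :=
  fun i => dotProduct_le_dotProduct_of_nonneg_right (hAB i) hx

def vertexMatrix (Al Au : Matrix (Fin m) (Fin n) ℝ) (s : Fin m → Bool) :
    Matrix (Fin m) (Fin n) ℝ :=
  of fun i j => if s i then Al i j else Au i j

def vertexRhs (bl bu : Fin m → ℝ) (s : Fin m → Bool) : Fin m → ℝ :=
  fun i => if s i then bu i else bl i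

variable {Al Au : Matrix (Fin m) (Fin n) ℝ} {bl bu : Fin m → ℝ}

theorem le_vertexMatrix (hA : matLE Al Au) (s : Fin m → Bool) :
    matLE Al (vertexMatrix Al Au s) := by
  intro i j
  by_cases h : s i <;> simp [vertexMatrix, h, hA i j]

theorem vertexMatrix_le (hA : matLE Al Au) (s : Fin m → Bool) :
    matLE (vertexMatrix Al Au s) Au := by
  intro i j
  by_cases h : s i <;> simp [vertexMatrix, h, hA i j]

theorem le_vertexRhs (hb : bl ≤ bu) (s : Fin m → Bool) : bl ≤ vertexRhs bl bu s := by
  intro i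
  by_cases h : s i <;> simp [vertexRhs, h, hb i]

theorem vertexRhs_le (hb : bl ≤ bu) (s : Fin m → Bool) : vertexRhs bl bu s ≤ bu := by
  intro i
  by_cases h : s i <;> simp [vertexRhs, h, hb i]

theorem vertexMatrix_mulVec_apply (s : Fin m → Bool) (x : Fin n → ℝ) (i : Fin m) :
    (vertexMatrix Al Au s *ᵥ x) i = if s i then (Al *ᵥ x) i else (Au *ᵥ x) i := by
  by_cases h : s i <;> simp [vertexMatrix, mulVec, h]

theorem exists_mem_convexHull_mulVec_eq_of_vertex_solutions
    {xs : (Fin m → Bool) → Fin n → ℝ}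
    (hxs : ∀ s, vertexMatrix Al Au s *ᵥ xs s = vertexRhs bl bu s) (hxs0 : ∀ s, 0 ≤ xs s)
    {A : Matrix (Fin m) (Fin n) ℝ} (hAl : matLE Al A) (hAu : matLE A Au)
    {b : Fin m → ℝ} (hbl : bl ≤ b) (hbu : b ≤ bu) :
    ∃ x ∈ convexHull ℝ (Set.range xs), A *ᵥ x = b := by
  suffices b ∈ A.mulVecLin '' convexHull ℝ (Set.range xs) by
    obtain ⟨x, hx, hAx⟩ := this
    exact ⟨x, hx, hAx⟩
  refine Convex.mem_of_meets_every_orthant ((convex_convexHull ℝ _).linear_image _)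
    (((Set.finite_range xs).isCompact_convexHull ℝ).image
      A.mulVecLin.continuous_of_finiteDimensional).isClosed fun s => ?_
  refine ⟨A *ᵥ xs s, ⟨xs s, subset_convexHull ℝ _ (Set.mem_range_self s), rfl⟩, fun i => ?_⟩
  have hrow := congrFun (hxs s) i
  rw [vertexMatrix_mulVec_apply] at hrow
  by_cases h : s i
  · simp only [h, if_true, vertexRhs] at hrow ⊢
    calc b i ≤ bu i := hbu i
      _ = (Al *ᵥ xs s) i := hrow.symm
      _ ≤ (A *ᵥ xs s) i := mulVec_le_mulVec_of_matLE hAl (hxs0 s) i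
  · simp only [h, Bool.false_eq_true, if_false, vertexRhs] at hrow ⊢
    calc (A *ᵥ xs s) i ≤ (Au *ᵥ xs s) i := mulVec_le_mulVec_of_matLE hAu (hxs0 s) i
      _ = bl i := hrow
      _ ≤ b i := hbl i

end IntervalScenarios

section OptimalValue

variable {ι κ : Type*} [Fintype κ]

noncomputable def optimalValue (A : Matrix ι κ ℝ) (b : ι → ℝ) (c : κ → ℝ) : EReal :=
  ⨅ x : {x : κ → ℝ // A *ᵥ x = b ∧ 0 ≤ x}, ((c ⬝ᵥ x.1 : ℝ) : EReal)

variable {A : Matrix ι κ ℝ} {b : ι → ℝ}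

theorem optimalValue_le {x : κ → ℝ} (hAx : A *ᵥ x = b) (hx : 0 ≤ x) (c : κ → ℝ) :
    optimalValue A b c ≤ (c ⬝ᵥ x : ℝ) :=
  iInf_le (fun x : {x : κ → ℝ // A *ᵥ x = b ∧ 0 ≤ x} => ((c ⬝ᵥ x.1 : ℝ) : EReal)) ⟨x, hAx, hx⟩

theorem optimalValue_eq_top_of_infeasible (h : ¬ ∃ x, A *ᵥ x = b ∧ 0 ≤ x) (c : κ → ℝ) :
    optimalValue A b c = ⊤ :=
  iInf_eq_top.2 fun x => (h ⟨x.1, x.2⟩).elim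

end OptimalValue

/-- An interval linear program `min cᵀx, Ax = b, x ≥ 0` is strongly feasible if and only
if its worst optimal value is finite. -/
theorem strongly_feasible_iff_worst_value_finite (m n : ℕ)
    (Al Au : Matrix (Fin m) (Fin n) ℝ) (bl bu : Fin m → ℝ) (cl cu : Fin n → ℝ)
    (hA : matLE Al Au) (hb : bl ≤ bu) (hc : cl ≤ cu) :
    (∀ (A : Matrix (Fin m) (Fin n) ℝ) (b : Fin m → ℝ),
        matLE Al A → matLE A Au → bl ≤ b → b ≤ bu →
        ∃ x : Fin n → ℝ, A.mulVec x = b ∧ 0 ≤ x) ↔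
    (⨆ A : {A : Matrix (Fin m) (Fin n) ℝ // matLE Al A ∧ matLE A Au},
     ⨆ b : {b : Fin m → ℝ // bl ≤ b ∧ b ≤ bu},
     ⨆ c : {c : Fin n → ℝ // cl ≤ c ∧ c ≤ cu},
     ⨅ x : {x : Fin n → ℝ // A.1.mulVec x = b.1 ∧ 0 ≤ x},
       ((c.1 ⬝ᵥ x.1 : ℝ) : EReal)) < ⊤ := by
  constructor
  · intro hsf
    choose xs hxs hxs0 using fun s => hsf (vertexMatrix Al Au s) (vertexRhs bl bu s)
      (le_vertexMatrix hA s) (vertexMatrix_le hA s) (le_vertexRhs hb s) (vertexRhs_le hb s)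
    obtain ⟨s₀, hs₀⟩ := Finite.exists_max fun s => cu ⬝ᵥ xs s
    refine lt_of_le_of_lt (iSup_le fun ⟨A, hAl, hAu⟩ => iSup_le fun ⟨b, hbl, hbu⟩ =>
      iSup_le fun ⟨c, _, hcu⟩ => ?_) (EReal.coe_lt_top (cu ⬝ᵥ xs s₀))
    obtain ⟨x, hx, hAx⟩ :=
      exists_mem_convexHull_mulVec_eq_of_vertex_solutions hxs hxs0 hAl hAu hbl hbu
    have hx0 : 0 ≤ x := convexHull_min (Set.range_subset_iff.2 hxs0) (convex_Ici 0) hx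
    obtain ⟨-, ⟨s, rfl⟩, hcux⟩ := ((dotProductBilin ℝ ℝ cu).convexOn convex_univ
      ).exists_ge_of_mem_convexHull (Set.subset_univ _) hx
    calc optimalValue A b c ≤ (c ⬝ᵥ x : ℝ) := optimalValue_le hAx hx0 c
      _ ≤ (cu ⬝ᵥ xs s₀ : ℝ) := EReal.coe_le_coe_iff.2 <|
        (dotProduct_le_dotProduct_of_nonneg_right hcu hx0).trans (hcux.trans (hs₀ s))
  · intro hlt A b hAl hAu hbl hbu
    by_contra hinf
    exact hlt.ne <| top_unique <| le_iSup_of_le ⟨A, hAl, hAu⟩ <| le_iSup_of_le ⟨b, hbl, hbu⟩ <|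
      le_iSup_of_le ⟨cl, le_rfl, hc⟩ (optimalValue_eq_top_of_infeasible hinf cl).ge
end

section
/- Let A ∈ ℝ^{m×n} be a fixed matrix and let 𝐛 ⊆ ℝᵐ, 𝐜 ⊆ ℝⁿ be interval vectors. A real number v is a finite optimal value of some scenario of the interval linear program min c⊤x subject to Ax = b, x ≥ 0 (with b ∈ 𝐛, c ∈ 𝐜) if and only if v is a finite optimal value of some scenario of the split interval linear program min c⊤x subject to Ax ≤ b₁, Ax ≥ b₂, x ≥ 0 (with b₁, b₂ ∈ 𝐛 chosen independently and c ∈ 𝐜). -/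
open Matrix

/-- Splitting equations into inequalities does not change the set of finite optimal values
of an ILP with a fixed coefficient matrix. -/
theorem finite_optimal_values_split_fixed_matrix (m n : ℕ) (A : Matrix (Fin m) (Fin n) ℝ)
    (bl bu : Fin m → ℝ) (cl cu : Fin n → ℝ) (hb : bl ≤ bu) (hc : cl ≤ cu) (v : ℝ) :
    (∃ (b : Fin m → ℝ) (c : Fin n → ℝ), bl ≤ b ∧ b ≤ bu ∧ cl ≤ c ∧ c ≤ cu ∧
      ∃ x : Fin n → ℝ, (A.mulVec x = b ∧ 0 ≤ x) ∧ c ⬝ᵥ x = v ∧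
        ∀ x' : Fin n → ℝ, (A.mulVec x' = b ∧ 0 ≤ x') → c ⬝ᵥ x ≤ c ⬝ᵥ x') ↔
    (∃ (b₁ b₂ : Fin m → ℝ) (c : Fin n → ℝ),
      bl ≤ b₁ ∧ b₁ ≤ bu ∧ bl ≤ b₂ ∧ b₂ ≤ bu ∧ cl ≤ c ∧ c ≤ cu ∧
      ∃ x : Fin n → ℝ, (A.mulVec x ≤ b₁ ∧ b₂ ≤ A.mulVec x ∧ 0 ≤ x) ∧ c ⬝ᵥ x = v ∧
        ∀ x' : Fin n → ℝ, (A.mulVec x' ≤ b₁ ∧ b₂ ≤ A.mulVec x' ∧ 0 ≤ x') →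
          c ⬝ᵥ x ≤ c ⬝ᵥ x') := by
  constructor
  · rintro ⟨b, c, hb1, hb2, hc1, hc2, x, ⟨hAx, hx0⟩, hval, hopt⟩
    exact ⟨b, b, c, hb1, hb2, hb1, hb2, hc1, hc2, x, ⟨hAx.le, hAx.ge, hx0⟩, hval,
      fun x' ⟨h1, h2, h3⟩ => hopt x' ⟨le_antisymm h1 h2, h3⟩⟩
  · rintro ⟨b₁, b₂, c, hb11, hb12, hb21, hb22, hc1, hc2, x, ⟨hAx1, hAx2, hx0⟩, hval, hopt⟩
    exact ⟨A.mulVec x, c, le_trans hb21 hAx2, le_trans hAx1 hb12, hc1, hc2, x,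
      ⟨rfl, hx0⟩, hval,
      fun x' ⟨h1, h2⟩ => hopt x' ⟨h1.le.trans hAx1, hAx2.trans h1.ge, h2⟩⟩
end

section
/- Let A ∈ ℝ^{m×n} be a fixed matrix and let 𝐛 ⊆ ℝᵐ, 𝐜 ⊆ ℝⁿ be interval vectors. A real number v is a finite optimal value of some scenario of the interval linear program min c⊤x subject to Ax ≤ b (with b ∈ 𝐛, c ∈ 𝐜) if and only if v is a finite optimal value of some scenario of the transformed interval linear program min c₁⊤x⁺ − c₂⊤x⁻ subject to Ax⁺ − Ax⁻ ≤ b, x⁺ ≥ 0, x⁻ ≥ 0 (with c₁, c₂ ∈ 𝐜 chosen independently and b ∈ 𝐛). -/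
open Matrix

private lemma convexOn_coord {n : ℕ} {K : Set (Fin n → ℝ)} (hK : Convex ℝ K) (a : ℝ) (i : Fin n) :
    ConvexOn ℝ K (fun x => a * x i) := by
  refine ⟨hK, ?_⟩
  intro x _ y _ s t _ _ _
  simp only [Pi.add_apply, Pi.smul_apply, smul_eq_mul]
  apply le_of_eq; ring

private lemma convexOn_max_coord {n : ℕ} {K : Set (Fin n → ℝ)} (hK : Convex ℝ K) (a b : ℝ)
    (i : Fin n) : ConvexOn ℝ K (fun x => max (a * x i) (b * x i)) :=
  (convexOn_coord hK a i).sup (convexOn_coord hK b i)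

private lemma convexOn_sum' {n : ℕ} {K : Set (Fin n → ℝ)} (hK : Convex ℝ K)
    (f : Fin n → (Fin n → ℝ) → ℝ) (hf : ∀ i, ConvexOn ℝ K (f i)) :
    ConvexOn ℝ K (fun x => ∑ i, f i x) := by
  refine ⟨hK, ?_⟩
  intro x hx y hy s t hs ht hst
  calc ∑ i, f i (s • x + t • y) ≤ ∑ i, (s * f i x + t * f i y) := by
        refine Finset.sum_le_sum fun i _ => ?_
        have := (hf i).2 hx hy hs ht hst
        simpa using this
    _ = s • ∑ i, f i x + t • ∑ i, f i y := by
        simp [Finset.sum_add_distrib, Finset.mul_sum]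

/-- One-coordinate linearization of a `max` term over a convex set. -/
private lemma key_one {n : ℕ} {K : Set (Fin n → ℝ)} (hK : Convex ℝ K)
    (φ : (Fin n → ℝ) → ℝ) (hφ : ConvexOn ℝ K φ) (j : Fin n) (a b v : ℝ) (hba : b ≤ a)
    (h : ∀ x ∈ K, v ≤ φ x + max (a * x j) (b * x j)) :
    ∃ c, b ≤ c ∧ c ≤ a ∧ ∀ x ∈ K, v ≤ φ x + c * x j := by
  set S : Set ℝ := insert b {r | ∃ x ∈ K, 0 < x j ∧ r = (v - φ x) / x j} with hS
  have hne : S.Nonempty := ⟨b, Set.mem_insert _ _⟩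
  have hub : ∀ r ∈ S, r ≤ a := by
    rintro r hr
    rcases hr with hr1 | ⟨x, hx, hxj, rfl⟩
    · rw [hr1]; exact hba
    · rw [div_le_iff₀ hxj]
      have h1 := h x hx
      have h2 : max (a * x j) (b * x j) = a * x j :=
        max_eq_left (mul_le_mul_of_nonneg_right hba hxj.le)
      rw [h2] at h1; linarith
  have hbdd : BddAbove S := ⟨a, hub⟩
  refine ⟨sSup S, le_csSup hbdd (Set.mem_insert _ _), csSup_le hne hub, ?_⟩
  intro x hx
  rcases lt_trichotomy (x j) 0 with hxj | hxj | hxj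
  · -- need : sSup S ≤ (v - φ x) / x j
    have hle : sSup S ≤ (v - φ x) / x j := by
      refine csSup_le hne ?_
      rintro r hr
      rcases hr with hr1 | ⟨y, hy, hyj, rfl⟩
      · -- b ≤ (v - φ x) / x j
        have h1 := h x hx
        have h2 : max (a * x j) (b * x j) = b * x j :=
          max_eq_right (mul_le_mul_of_nonpos_right hba hxj.le)
        rw [h2] at h1
        rw [hr1, le_div_iff_of_neg hxj]; linarith
      · -- cross inequality
        have hD : 0 < y j - x j := by linarith
        set μ : ℝ := (-(x j)) / (y j - x j) with hμ
        have hμ0 : 0 ≤ μ := div_nonneg (by linarith) (by linarith)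
        have hμ1 : 0 ≤ 1 - μ := by
          have : μ ≤ 1 := by
            rw [hμ, div_le_one hD]; linarith
          linarith
        have hsum : μ + (1 - μ) = 1 := by ring
        have hμval : μ * (y j - x j) = -(x j) := by
          rw [hμ]; exact div_mul_cancel₀ _ (ne_of_gt hD)
        have hzK : μ • y + (1 - μ) • x ∈ K := hK hy hx hμ0 hμ1 hsum
        have hzj : (μ • y + (1 - μ) • x) j = 0 := by
          simp only [Pi.add_apply, Pi.smul_apply, smul_eq_mul]
          nlinarith [hμval]
        have hz := h _ hzK
        rw [hzj] at hz
        simp only [mul_zero, max_self, add_zero] at hz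
        have hconv : φ (μ • y + (1 - μ) • x) ≤ μ * φ y + (1 - μ) * φ x := by
          have := hφ.2 hy hx hμ0 hμ1 hsum
          simpa using this
        have hkey : v ≤ μ * φ y + (1 - μ) * φ x := le_trans hz hconv
        have hmul := mul_le_mul_of_nonneg_right hkey (le_of_lt hD)
        have e1 : μ * (y j - x j) * φ y = -(x j) * φ y := by rw [hμval]
        have e2 : μ * (y j - x j) * φ x = -(x j) * φ x := by rw [hμval]
        have hkey2 : v * (y j - x j) ≤ (-(x j)) * φ y + (y j) * φ x := by
          nlinarith [hmul, e1, e2]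
        -- (v - φ y) / y j ≤ (v - φ x) / x j
        set q : ℝ := (v - φ x) / x j with hq
        have hxj' : x j ≠ 0 := ne_of_lt hxj
        have hq' : q * x j = v - φ x := by
          rw [hq]; exact div_mul_cancel₀ _ hxj'
        have h5 : y j * (v - φ x) ≤ x j * (v - φ y) := by nlinarith [hkey2]
        have h6 : y j * (q * x j) ≤ x j * (v - φ y) := by rw [hq']; exact h5
        rw [div_le_iff₀ hyj]
        nlinarith [h6, hxj, hyj]
    have h2 : sSup S * x j ≥ ((v - φ x) / x j) * x j :=
      mul_le_mul_of_nonpos_right hle (le_of_lt hxj)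
    have h3 : ((v - φ x) / x j) * x j = v - φ x := div_mul_cancel₀ _ (ne_of_lt hxj)
    linarith
  · have h1 := h x hx
    rw [hxj] at h1
    simp only [mul_zero, max_self, add_zero] at h1 ⊢
    rw [hxj]; simpa using h1
  · have hmem : (v - φ x) / x j ∈ S := Set.mem_insert_iff.2 (Or.inr ⟨x, hx, hxj, rfl⟩)
    have hle : (v - φ x) / x j ≤ sSup S := le_csSup hbdd hmem
    rw [div_le_iff₀ hxj] at hle
    linarith


/-- Linearization of all `max` terms over a convex set. -/
private lemma key_all {n : ℕ} {K : Set (Fin n → ℝ)} (hK : Convex ℝ K)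
    (c₁ c₂ : Fin n → ℝ) (h21 : ∀ i, c₂ i ≤ c₁ i) (v : ℝ)
    (h : ∀ x ∈ K, v ≤ ∑ i, max (c₁ i * x i) (c₂ i * x i)) :
    ∃ c : Fin n → ℝ, (∀ i, c₂ i ≤ c i ∧ c i ≤ c₁ i) ∧ ∀ x ∈ K, v ≤ ∑ i, c i * x i := by
  suffices H : ∀ T : Finset (Fin n), ∀ d : Fin n → ℝ, (∀ i, c₂ i ≤ d i ∧ d i ≤ c₁ i) →
      (∀ x ∈ K, v ≤ ∑ i, (if i ∈ T then max (c₁ i * x i) (c₂ i * x i) else d i * x i)) →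
      ∃ c : Fin n → ℝ, (∀ i, c₂ i ≤ c i ∧ c i ≤ c₁ i) ∧ ∀ x ∈ K, v ≤ ∑ i, c i * x i by
    refine H Finset.univ c₂ (fun i => ⟨le_refl _, h21 i⟩) ?_
    simpa using h
  intro T
  induction T using Finset.induction_on with
  | empty =>
    intro d hd hsum
    exact ⟨d, hd, by simpa using hsum⟩
  | @insert j T hj ih =>
    intro d hd hsum
    set φ : (Fin n → ℝ) → ℝ := fun x =>
      ∑ i, (if i ∈ T then max (c₁ i * x i) (c₂ i * x i)
            else if i = j then 0 else d i * x i) with hφdef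
    have hφ : ConvexOn ℝ K φ := by
      apply convexOn_sum' hK
      intro i
      by_cases hiT : i ∈ T
      · simp only [if_pos hiT]
        exact convexOn_max_coord hK _ _ i
      · by_cases hij : i = j
        · simp only [if_neg hiT, if_pos hij]
          exact convexOn_const (0 : ℝ) hK
        · simp only [if_neg hiT, if_neg hij]
          exact convexOn_coord hK _ i
    have hsplit : ∀ (x : Fin n → ℝ),
        (∑ i, (if i ∈ insert j T then max (c₁ i * x i) (c₂ i * x i) else d i * x i)) =
        φ x + max (c₁ j * x j) (c₂ j * x j) := by
      intro x
      have e1 : (∑ i, (if i ∈ insert j T then max (c₁ i * x i) (c₂ i * x i) else d i * x i))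
          = (if j ∈ insert j T then max (c₁ j * x j) (c₂ j * x j) else d j * x j)
            + ∑ i ∈ Finset.univ.erase j,
              (if i ∈ insert j T then max (c₁ i * x i) (c₂ i * x i) else d i * x i) :=
        (Finset.add_sum_erase _ _ (Finset.mem_univ j)).symm
      have e2 : φ x = (if j ∈ T then max (c₁ j * x j) (c₂ j * x j)
              else if j = j then 0 else d j * x j)
            + ∑ i ∈ Finset.univ.erase j,
              (if i ∈ T then max (c₁ i * x i) (c₂ i * x i)
                else if i = j then 0 else d i * x i) :=
        (Finset.add_sum_erase _ _ (Finset.mem_univ j)).symm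
      have e3 : (∑ i ∈ Finset.univ.erase j,
              (if i ∈ insert j T then max (c₁ i * x i) (c₂ i * x i) else d i * x i))
          = ∑ i ∈ Finset.univ.erase j,
              (if i ∈ T then max (c₁ i * x i) (c₂ i * x i)
                else if i = j then 0 else d i * x i) := by
        refine Finset.sum_congr rfl fun i hi => ?_
        have hij : i ≠ j := Finset.ne_of_mem_erase hi
        simp [Finset.mem_insert, hij]
      rw [e1, e3, e2]
      simp only [Finset.mem_insert, true_or, if_true, hj, if_false, if_pos rfl]
      ring
    obtain ⟨cj, hcj2, hcj1, hcj⟩ := key_one hK φ hφ j (c₁ j) (c₂ j) v (h21 j)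
      (fun x hx => by rw [← hsplit x]; exact hsum x hx)
    set d' : Fin n → ℝ := Function.update d j cj with hd'def
    have hd' : ∀ i, c₂ i ≤ d' i ∧ d' i ≤ c₁ i := by
      intro i
      by_cases hij : i = j
      · subst hij; simp [hd'def, hcj2, hcj1]
      · simp [hd'def, Function.update_of_ne hij, hd i]
    refine ih d' hd' ?_
    intro x hx
    have e1 : (∑ i, (if i ∈ T then max (c₁ i * x i) (c₂ i * x i) else d' i * x i))
        = (if j ∈ T then max (c₁ j * x j) (c₂ j * x j) else d' j * x j)
          + ∑ i ∈ Finset.univ.erase j,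
            (if i ∈ T then max (c₁ i * x i) (c₂ i * x i) else d' i * x i) :=
      (Finset.add_sum_erase _ _ (Finset.mem_univ j)).symm
    have e2 : φ x = (if j ∈ T then max (c₁ j * x j) (c₂ j * x j)
            else if j = j then 0 else d j * x j)
          + ∑ i ∈ Finset.univ.erase j,
            (if i ∈ T then max (c₁ i * x i) (c₂ i * x i)
              else if i = j then 0 else d i * x i) :=
      (Finset.add_sum_erase _ _ (Finset.mem_univ j)).symm
    have e3 : (∑ i ∈ Finset.univ.erase j,
            (if i ∈ T then max (c₁ i * x i) (c₂ i * x i) else d' i * x i))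
        = ∑ i ∈ Finset.univ.erase j,
            (if i ∈ T then max (c₁ i * x i) (c₂ i * x i)
              else if i = j then 0 else d i * x i) := by
      refine Finset.sum_congr rfl fun i hi => ?_
      have hij : i ≠ j := Finset.ne_of_mem_erase hi
      simp [hd'def, Function.update_of_ne hij, hij]
    have hdj' : d' j = cj := by simp [hd'def]
    rw [e1, e3]
    have := hcj x hx
    rw [e2] at this
    simp only [hj, if_false, if_pos rfl, if_true, hdj', zero_add] at this ⊢
    linarith

/-- Substituting a difference of two non-negative variables for the free variables does not
change the set of finite optimal values of an ILP with a fixed coefficient matrix. -/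
theorem finite_optimal_values_nonneg_substitution_fixed_matrix (m n : ℕ)
    (A : Matrix (Fin m) (Fin n) ℝ) (bl bu : Fin m → ℝ) (cl cu : Fin n → ℝ)
    (hb : bl ≤ bu) (hc : cl ≤ cu) (v : ℝ) :
    (∃ (b : Fin m → ℝ) (c : Fin n → ℝ), bl ≤ b ∧ b ≤ bu ∧ cl ≤ c ∧ c ≤ cu ∧
      ∃ x : Fin n → ℝ, A.mulVec x ≤ b ∧ c ⬝ᵥ x = v ∧
        ∀ x' : Fin n → ℝ, A.mulVec x' ≤ b → c ⬝ᵥ x ≤ c ⬝ᵥ x') ↔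
    (∃ (b : Fin m → ℝ) (c₁ c₂ : Fin n → ℝ),
      bl ≤ b ∧ b ≤ bu ∧ cl ≤ c₁ ∧ c₁ ≤ cu ∧ cl ≤ c₂ ∧ c₂ ≤ cu ∧
      ∃ xp xm : Fin n → ℝ,
        (A.mulVec xp - A.mulVec xm ≤ b ∧ 0 ≤ xp ∧ 0 ≤ xm) ∧
        c₁ ⬝ᵥ xp - c₂ ⬝ᵥ xm = v ∧
        ∀ xp' xm' : Fin n → ℝ,
          (A.mulVec xp' - A.mulVec xm' ≤ b ∧ 0 ≤ xp' ∧ 0 ≤ xm') →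
          c₁ ⬝ᵥ xp - c₂ ⬝ᵥ xm ≤ c₁ ⬝ᵥ xp' - c₂ ⬝ᵥ xm') := by
  constructor
  · -- forward direction
    rintro ⟨b, c, hbl, hbu, hcl, hcu, x, hfeas, hval, hopt⟩
    set xp : Fin n → ℝ := fun i => max (x i) 0 with hxp
    set xm : Fin n → ℝ := fun i => max (-(x i)) 0 with hxm
    have hdiff : xp - xm = x := by
      funext i
      simp only [hxp, hxm, Pi.sub_apply]
      rcases le_total 0 (x i) with h | h
      · rw [max_eq_left h, max_eq_right (by linarith)]; ring
      · rw [max_eq_right h, max_eq_left (by linarith)]; ring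
    refine ⟨b, c, c, hbl, hbu, hcl, hcu, hcl, hcu, xp, xm,
      ⟨?_, ?_, ?_⟩, ?_, ?_⟩
    · rw [← Matrix.mulVec_sub, hdiff]; exact hfeas
    · intro i; exact le_max_right _ _
    · intro i; exact le_max_right _ _
    · rw [← dotProduct_sub, hdiff]; exact hval
    · rintro xp' xm' ⟨hf, _, _⟩
      have hf' : A.mulVec (xp' - xm') ≤ b := by rwa [Matrix.mulVec_sub]
      have h2 := hopt _ hf'
      rw [dotProduct_sub] at h2
      rw [← dotProduct_sub, hdiff]
      linarith
  · -- backward direction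
    rintro ⟨b, c₁, c₂, hbl, hbu, hc1l, hc1u, hc2l, hc2u, xp, xm,
      ⟨hfeas, hxp, hxm⟩, hval, hopt⟩
    -- Step 1 : c₂ ≤ c₁
    have h21 : ∀ i, c₂ i ≤ c₁ i := by
      intro i
      have hfe : A.mulVec (xp + Pi.single i 1) - A.mulVec (xm + Pi.single i 1) ≤ b := by
        have heq : A.mulVec (xp + Pi.single i 1) - A.mulVec (xm + Pi.single i 1)
            = A.mulVec xp - A.mulVec xm := by
          rw [Matrix.mulVec_add, Matrix.mulVec_add]; abel
        rw [heq]; exact hfeas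
      have hp : (0 : Fin n → ℝ) ≤ xp + Pi.single i 1 := by
        intro k
        have : (0:ℝ) ≤ (Pi.single i 1 : Fin n → ℝ) k := by
          rcases eq_or_ne k i with rfl | hki
          · simp
          · simp [Pi.single_apply, hki]
        have := add_nonneg (hxp k) this
        simpa using this
      have hm : (0 : Fin n → ℝ) ≤ xm + Pi.single i 1 := by
        intro k
        have : (0:ℝ) ≤ (Pi.single i 1 : Fin n → ℝ) k := by
          rcases eq_or_ne k i with rfl | hki
          · simp
          · simp [Pi.single_apply, hki]
        have := add_nonneg (hxm k) this
        simpa using this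
      have h2 := hopt _ _ ⟨hfe, hp, hm⟩
      rw [dotProduct_add, dotProduct_add] at h2
      have e1 : c₁ ⬝ᵥ Pi.single i 1 = c₁ i := by simp
      have e2 : c₂ ⬝ᵥ Pi.single i 1 = c₂ i := by simp
      rw [e1, e2] at h2
      linarith
    -- Step 2 : the feasible set and its convexity
    set K : Set (Fin n → ℝ) := {x | A.mulVec x ≤ b} with hKdef
    have hK : Convex ℝ K := by
      intro x hx y hy s t hs ht hst
      intro i
      have hx' := hx i
      have hy' := hy i
      have : A.mulVec (s • x + t • y) i = s * A.mulVec x i + t * A.mulVec y i := by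
        rw [Matrix.mulVec_add, Matrix.mulVec_smul, Matrix.mulVec_smul]
        simp
      rw [this]
      calc s * A.mulVec x i + t * A.mulVec y i
          ≤ s * b i + t * b i :=
            add_le_add (mul_le_mul_of_nonneg_left hx' hs) (mul_le_mul_of_nonneg_left hy' ht)
        _ = b i := by rw [← add_mul, hst, one_mul]
    -- Step 3 : lower bound on the concave envelope
    have hsum : ∀ x ∈ K, v ≤ ∑ i, max (c₁ i * x i) (c₂ i * x i) := by
      intro x hx
      set xp' : Fin n → ℝ := fun i => max (x i) 0 with hxp'
      set xm' : Fin n → ℝ := fun i => max (-(x i)) 0 with hxm'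
      have hdiff : xp' - xm' = x := by
        funext i
        simp only [hxp', hxm', Pi.sub_apply]
        rcases le_total 0 (x i) with h | h
        · rw [max_eq_left h, max_eq_right (by linarith)]; ring
        · rw [max_eq_right h, max_eq_left (by linarith)]; ring
      have hfe : A.mulVec xp' - A.mulVec xm' ≤ b := by
        rw [← Matrix.mulVec_sub, hdiff]; exact hx
      have h2 := hopt xp' xm' ⟨hfe, fun i => le_max_right _ _, fun i => le_max_right _ _⟩
      rw [hval] at h2
      refine le_trans h2 (le_of_eq ?_)
      have : c₁ ⬝ᵥ xp' - c₂ ⬝ᵥ xm' = ∑ i, (c₁ i * xp' i - c₂ i * xm' i) := by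
        simp [dotProduct, Finset.sum_sub_distrib]
      rw [this]
      refine Finset.sum_congr rfl fun i _ => ?_
      simp only [hxp', hxm']
      rcases le_total 0 (x i) with h | h
      · rw [max_eq_left h, max_eq_right (by linarith),
          max_eq_left (mul_le_mul_of_nonneg_right (h21 i) h)]
        ring
      · rw [max_eq_right h, max_eq_left (by linarith),
          max_eq_right (mul_le_mul_of_nonpos_right (h21 i) h)]
        ring
    obtain ⟨c, hcb, hcK⟩ := key_all hK c₁ c₂ h21 v hsum
    have hxK : xp - xm ∈ K := by
      show A.mulVec (xp - xm) ≤ b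
      rw [Matrix.mulVec_sub]; exact hfeas
    have hge : v ≤ c ⬝ᵥ (xp - xm) := by
      have := hcK _ hxK
      simpa [dotProduct] using this
    have hle : c ⬝ᵥ (xp - xm) ≤ v := by
      rw [dotProduct_sub, ← hval]
      have h1 : c ⬝ᵥ xp ≤ c₁ ⬝ᵥ xp :=
        Finset.sum_le_sum fun i _ => mul_le_mul_of_nonneg_right (hcb i).2 (hxp i)
      have h2 : c₂ ⬝ᵥ xm ≤ c ⬝ᵥ xm :=
        Finset.sum_le_sum fun i _ => mul_le_mul_of_nonneg_right (hcb i).1 (hxm i)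
      linarith
    have hveq : c ⬝ᵥ (xp - xm) = v := le_antisymm hle hge
    refine ⟨b, c, hbl, hbu, ?_, ?_, xp - xm, hxK, hveq, ?_⟩
    · intro i; exact le_trans (hc2l i) (hcb i).1
    · intro i; exact le_trans (hcb i).2 (hc1u i)
    · intro x' hx'
      rw [hveq]
      have := hcK x' hx'
      simpa [dotProduct] using this
end

section
/- Let 𝐀 ⊆ ℝ^{m×n} be an interval matrix and 𝐛 ⊆ ℝᵐ, 𝐜 ⊆ ℝⁿ interval vectors. A vector x ∈ ℝⁿ is optimal for some scenario of the interval linear program min c⊤x subject to Ax ≤ b (with A ∈ 𝐀, b ∈ 𝐛, c ∈ 𝐜) if and only if there exists y ∈ ℝᵐ with y ≥ 0 such that the pair (x, y) is optimal for some scenario of the interval linear program min c⊤x subject to Ax + y = b, y ≥ 0 (with A ∈ 𝐀, b ∈ 𝐛, c ∈ 𝐜); i.e., adding slack variables preserves the weakly optimal solutions. -/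
open Matrix

/-- Adding slack variables preserves the weakly optimal solutions of an ILP. -/
theorem weak_optimality_slack (m n : ℕ) (Al Au : Matrix (Fin m) (Fin n) ℝ)
    (bl bu : Fin m → ℝ) (cl cu : Fin n → ℝ)
    (hA : matLE Al Au) (hb : bl ≤ bu) (hc : cl ≤ cu) (x : Fin n → ℝ) :
    (∃ (A : Matrix (Fin m) (Fin n) ℝ) (b : Fin m → ℝ) (c : Fin n → ℝ),
      matLE Al A ∧ matLE A Au ∧ bl ≤ b ∧ b ≤ bu ∧ cl ≤ c ∧ c ≤ cu ∧
      A.mulVec x ≤ b ∧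
      ∀ x' : Fin n → ℝ, A.mulVec x' ≤ b → c ⬝ᵥ x ≤ c ⬝ᵥ x') ↔
    (∃ y : Fin m → ℝ, 0 ≤ y ∧
      ∃ (A : Matrix (Fin m) (Fin n) ℝ) (b : Fin m → ℝ) (c : Fin n → ℝ),
        matLE Al A ∧ matLE A Au ∧ bl ≤ b ∧ b ≤ bu ∧ cl ≤ c ∧ c ≤ cu ∧
        (A.mulVec x + y = b ∧ 0 ≤ y) ∧
        ∀ (x' : Fin n → ℝ) (y' : Fin m → ℝ),
          (A.mulVec x' + y' = b ∧ 0 ≤ y') → c ⬝ᵥ x ≤ c ⬝ᵥ x') := by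
  constructor
  · rintro ⟨A, b, c, h1, h2, h3, h4, h5, h6, hfeas, hopt⟩
    refine ⟨b - A.mulVec x, ?_, A, b, c, h1, h2, h3, h4, h5, h6,
      ⟨by simp, ?_⟩, ?_⟩
    · intro i; simpa using sub_nonneg.mpr (hfeas i)
    · intro i; simpa using sub_nonneg.mpr (hfeas i)
    · rintro x' y' ⟨heq, hy'⟩
      apply hopt
      intro i
      have := congrFun heq i
      simp [Pi.add_apply] at this
      have h0 : (0:ℝ) ≤ y' i := hy' i
      linarith
  · rintro ⟨y, hy, A, b, c, h1, h2, h3, h4, h5, h6, ⟨heq, hy2⟩, hopt⟩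
    refine ⟨A, b, c, h1, h2, h3, h4, h5, h6, ?_, ?_⟩
    · intro i
      have h := congrFun heq i
      have h0 : (0:ℝ) ≤ y i := hy i
      simp [Pi.add_apply] at h
      linarith
    · intro x' hx'
      exact hopt x' (b - A.mulVec x') ⟨by simp, fun i => sub_nonneg.mpr (hx' i)⟩
end

section
/- Let 𝐀 ⊆ ℝ^{m×n} be an interval matrix and 𝐛 ⊆ ℝᵐ, 𝐜 ⊆ ℝⁿ interval vectors. A vector x ∈ ℝⁿ satisfies x ≥ 0 and is weakly feasible for the interval system 𝐀x = 𝐛 (i.e., there exist A ∈ 𝐀, b ∈ 𝐛 with Ax = b) if and only if x ≥ 0 and x is weakly feasible for the split system (i.e., there exist A₁, A₂ ∈ 𝐀 and b₁, b₂ ∈ 𝐛 with A₁x ≤ b₁ and A₂x ≥ b₂); in particular, splitting equations into inequalities preserves the weakly feasible set of an interval linear program with nonnegative variables. -/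
open Matrix

/-- Splitting interval equations into inequalities preserves the weakly feasible set of an
interval linear program with nonnegative variables. -/
theorem weak_feasibility_split_nonneg (m n : ℕ) (Al Au : Matrix (Fin m) (Fin n) ℝ)
    (bl bu : Fin m → ℝ) (hA : matLE Al Au) (hb : bl ≤ bu) (x : Fin n → ℝ) :
    (0 ≤ x ∧ ∃ (A : Matrix (Fin m) (Fin n) ℝ) (b : Fin m → ℝ),
      matLE Al A ∧ matLE A Au ∧ bl ≤ b ∧ b ≤ bu ∧ A.mulVec x = b) ↔
    (0 ≤ x ∧ ∃ (A₁ A₂ : Matrix (Fin m) (Fin n) ℝ) (b₁ b₂ : Fin m → ℝ),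
      matLE Al A₁ ∧ matLE A₁ Au ∧ matLE Al A₂ ∧ matLE A₂ Au ∧
      bl ≤ b₁ ∧ b₁ ≤ bu ∧ bl ≤ b₂ ∧ b₂ ≤ bu ∧
      A₁.mulVec x ≤ b₁ ∧ b₂ ≤ A₂.mulVec x) := by
  constructor
  · rintro ⟨hx, A, b, h1, h2, h3, h4, h5⟩
    exact ⟨hx, A, A, b, b, h1, h2, h1, h2, h3, h4, h3, h4, le_of_eq h5, le_of_eq h5.symm⟩
  · rintro ⟨hx, A₁, A₂, b₁, b₂, hA1l, hA1u, hA2l, hA2u, hb1l, hb1u, hb2l, hb2u, hle, hge⟩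
    refine ⟨hx, ?_⟩
    set L : Fin m → ℝ := Al.mulVec x with hL
    set U : Fin m → ℝ := Au.mulVec x with hU
    have hmono : ∀ (P Q : Matrix (Fin m) (Fin n) ℝ), matLE P Q →
        ∀ i, P.mulVec x i ≤ Q.mulVec x i := by
      intro P Q hPQ i
      simp only [mulVec, dotProduct]
      apply Finset.sum_le_sum
      intro j _
      exact mul_le_mul_of_nonneg_right (hPQ i j) (hx j)
    have hLU : ∀ i, L i ≤ U i := hmono Al Au hA
    have hLbu : ∀ i, L i ≤ bu i := fun i =>
      le_trans (hmono Al A₁ hA1l i) (le_trans (hle i) (hb1u i))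
    have hblU : ∀ i, bl i ≤ U i := fun i =>
      le_trans (le_trans (hb2l i) (hge i)) (hmono A₂ Au hA2u i)
    set v : Fin m → ℝ := fun i => max (L i) (bl i) with hv
    have hvL : ∀ i, L i ≤ v i := fun i => le_max_left _ _
    have hvU : ∀ i, v i ≤ U i := fun i => max_le (hLU i) (hblU i)
    have hvbl : ∀ i, bl i ≤ v i := fun i => le_max_right _ _
    have hvbu : ∀ i, v i ≤ bu i := fun i => max_le (hLbu i) (hb i)
    set t : Fin m → ℝ := fun i => if U i = L i then 0 else (U i - v i) / (U i - L i) with ht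
    have ht01 : ∀ i, 0 ≤ t i ∧ t i ≤ 1 := by
      intro i
      simp only [ht]
      split
      · norm_num
      · rename_i h
        have hpos : 0 < U i - L i := lt_of_le_of_ne (by linarith [hLU i]) (by
          intro hc; exact h (by linarith))
        constructor
        · apply div_nonneg (by linarith [hvU i]) (le_of_lt hpos)
        · rw [div_le_one hpos]; linarith [hvL i]
    set A : Matrix (Fin m) (Fin n) ℝ :=
      fun i j => t i * Al i j + (1 - t i) * Au i j with hAdef
    have hAx : ∀ i, A.mulVec x i = t i * L i + (1 - t i) * U i := by
      intro i
      simp only [hAdef, hL, hU, mulVec, dotProduct, add_mul, Finset.sum_add_distrib,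
        Finset.mul_sum, mul_assoc]
    refine ⟨A, v, ?_, ?_, hvbl, hvbu, ?_⟩
    · intro i j
      obtain ⟨h0, h1⟩ := ht01 i
      have := hA i j
      simp only [hAdef]
      nlinarith
    · intro i j
      obtain ⟨h0, h1⟩ := ht01 i
      have := hA i j
      simp only [hAdef]
      nlinarith
    · funext i
      rw [hAx i]
      by_cases h : U i = L i
      · have ht0 : t i = 0 := by simp [ht, h]
        have : v i = L i := le_antisymm (by rw [← h] at *; exact hvU i) (hvL i)
        rw [ht0, this, h]; ring
      · have hpos : 0 < U i - L i := lt_of_le_of_ne (by linarith [hLU i]) (by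
          intro hc; exact h (by linarith))
        have ht0 : t i = (U i - v i) / (U i - L i) := by simp [ht, h]
        rw [ht0]
        field_simp
        ring
end

section
/- Let 𝐀 ⊆ ℝ^{m×n} be an interval matrix and 𝐛 ⊆ ℝᵐ, 𝐜 ⊆ ℝⁿ interval vectors, and set c̲ the lower bound of 𝐜. The best optimal value f̲ of the interval linear program min c⊤x subject to Ax = b, x ≥ 0 (with A ∈ 𝐀, b ∈ 𝐛, c ∈ 𝐜), defined as the infimum over all scenarios of the scenario's optimal value in the extended reals (+∞ for infeasible scenarios), equals the infimum of c̲⊤x over the weakly feasible set M = {x ∈ ℝⁿ : x ≥ 0 and ∃A ∈ 𝐀, ∃b ∈ 𝐛, Ax = b}. -/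
open Matrix

private lemma dot_mono {n : ℕ} {cl c x : Fin n → ℝ} (hc : cl ≤ c) (hx : 0 ≤ x) :
    cl ⬝ᵥ x ≤ c ⬝ᵥ x := by
  apply Finset.sum_le_sum
  intro i _
  exact mul_le_mul_of_nonneg_right (hc i) (hx i)

/-- The best optimal value of the interval program `min cᵀx, Ax = b, x ≥ 0` equals the
infimum of `c̲ᵀx` over the weakly feasible set. -/
theorem best_value_formula_typeI (m n : ℕ) (Al Au : Matrix (Fin m) (Fin n) ℝ)
    (bl bu : Fin m → ℝ) (cl cu : Fin n → ℝ)
    (hA : matLE Al Au) (hb : bl ≤ bu) (hc : cl ≤ cu) :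
    (⨅ A : {A : Matrix (Fin m) (Fin n) ℝ // matLE Al A ∧ matLE A Au},
     ⨅ b : {b : Fin m → ℝ // bl ≤ b ∧ b ≤ bu},
     ⨅ c : {c : Fin n → ℝ // cl ≤ c ∧ c ≤ cu},
     ⨅ x : {x : Fin n → ℝ // A.1.mulVec x = b.1 ∧ 0 ≤ x},
       ((c.1 ⬝ᵥ x.1 : ℝ) : EReal)) =
    ⨅ x : {x : Fin n → ℝ // 0 ≤ x ∧ ∃ (A : Matrix (Fin m) (Fin n) ℝ) (b : Fin m → ℝ),
        matLE Al A ∧ matLE A Au ∧ bl ≤ b ∧ b ≤ bu ∧ A.mulVec x = b},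
      ((cl ⬝ᵥ x.1 : ℝ) : EReal) := by
  apply le_antisymm
  · apply le_iInf
    rintro ⟨x, hx0, A, b, hAl, hAu, hbl, hbu, hAx⟩
    refine iInf_le_of_le ⟨A, hAl, hAu⟩ ?_
    refine iInf_le_of_le ⟨b, hbl, hbu⟩ ?_
    refine iInf_le_of_le ⟨cl, le_refl _, hc⟩ ?_
    exact iInf_le_of_le ⟨x, hAx, hx0⟩ le_rfl
  · apply le_iInf; rintro ⟨A, hAl, hAu⟩
    apply le_iInf; rintro ⟨b, hbl, hbu⟩
    apply le_iInf; rintro ⟨c, hcl, hcu⟩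
    apply le_iInf; rintro ⟨x, hAx, hx0⟩
    refine iInf_le_of_le ⟨x, hx0, A, b, hAl, hAu, hbl, hbu, hAx⟩ ?_
    exact EReal.coe_le_coe_iff.mpr (dot_mono hcl hx0)
end

section
/- Let A ∈ ℝ^{m×n} be a fixed matrix and let 𝐛 ⊆ ℝᵐ, 𝐜 ⊆ ℝⁿ be interval vectors. A real number v is a finite optimal value of some scenario of the interval linear program min c⊤x subject to Ax ≤ b (with b ∈ 𝐛, c ∈ 𝐜) if and only if v is a finite optimal value of some scenario of the dual interval linear program max b⊤y subject to A⊤y = c, y ≤ 0 (with b ∈ 𝐛, c ∈ 𝐜); that is, the interval program and its dual have the same set of finite optimal values. -/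
/-!
For a fixed scenario `(b, c)` the theorem is strong LP duality: `v` is the optimal value of
`min cᵀx, Ax ≤ b` iff it is the optimal value of its dual. Weak duality gives one inequality.
The other comes from Farkas' lemma, obtained by separating a point from a closed convex cone;
finitely generated cones are closed because, by Carathéodory's argument, such a cone is a finite
union of cones spanned by linearly independent vectors, which are linear images of an orthant.
Written in inequality form, the dual program has the primal one as its dual, so the same
argument applies in both directions.
-/

open Matrix

/-- Carathéodory's argument: move along a linear dependence until a coefficient vanishes. -/
lemma exists_nonneg_eq_zero_of_not_linearIndependent {ι E : Type*} [Fintype ι] [AddCommGroup E]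
    [Module ℝ E] {v : ι → E} (hv : ¬LinearIndependent ℝ v) {lam : ι → ℝ} (hlam : 0 ≤ lam) :
    ∃ μ : ι → ℝ, 0 ≤ μ ∧ (∃ i, μ i = 0) ∧ ∑ i, μ i • v i = ∑ i, lam i • v i := by
  classical
  obtain ⟨c, hc, hpos⟩ : ∃ c : ι → ℝ, ∑ i, c i • v i = 0 ∧ ∃ i, 0 < c i := by
    obtain ⟨g, hg, j, hj⟩ := Fintype.not_linearIndependent_iff.mp hv
    rcases hj.lt_or_gt with hj | hj
    · exact ⟨-g, by simp [Finset.sum_neg_distrib, hg], j, by simpa using hj⟩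
    · exact ⟨g, hg, j, hj⟩
  obtain ⟨i₀, hi₀, hmin⟩ := Finset.exists_min_image {i | 0 < c i} (fun i => lam i / c i)
    (by simpa [Finset.Nonempty] using hpos)
  rw [Finset.mem_filter_univ] at hi₀
  set t := lam i₀ / c i₀
  have ht : 0 ≤ t := div_nonneg (hlam i₀) hi₀.le
  refine ⟨lam - t • c, fun i => ?_, ⟨i₀, ?_⟩, ?_⟩
  · rcases le_or_gt (c i) 0 with hci | hci
    · simpa using (mul_nonpos_of_nonneg_of_nonpos ht hci).trans (hlam i)
    · simpa using (le_div_iff₀ hci).mp (hmin i (by simpa using hci))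
  · simp [t, div_mul_cancel₀ _ hi₀.ne']
  · simp [sub_smul, Finset.sum_sub_distrib, mul_smul, ← Finset.smul_sum, hc]

namespace PointedCone

variable {ι E : Type*} [Fintype ι] [AddCommGroup E] [Module ℝ E]

lemma mem_hull_range_iff {v : ι → E} {x : E} :
    x ∈ hull ℝ (Set.range v) ↔ ∃ lam : ι → ℝ, 0 ≤ lam ∧ ∑ i, lam i • v i = x := by
  rw [Submodule.mem_span_range_iff_exists_fun]
  constructor
  · rintro ⟨c, rfl⟩
    exact ⟨fun i => c i, fun i => (c i).2, rfl⟩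
  · rintro ⟨lam, hlam, rfl⟩
    exact ⟨fun i => ⟨lam i, hlam i⟩, rfl⟩

lemma coe_hull_range (v : ι → E) :
    (hull ℝ (Set.range v) : Set E) = Fintype.linearCombination ℝ v '' Set.Ici 0 := by
  ext x
  simp [mem_hull_range_iff, Fintype.linearCombination_apply]

lemma coe_hull_range_eq_iUnion_of_not_linearIndependent {v : ι → E}
    (hv : ¬LinearIndependent ℝ v) :
    (hull ℝ (Set.range v) : Set E) = ⋃ i, hull ℝ (Set.range fun j : {j // j ≠ i} => v j.1) := by
  classical
  refine subset_antisymm (fun x hx => ?_) (Set.iUnion_subset fun i =>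
    Submodule.span_mono (Set.range_comp_subset_range _ v))
  obtain ⟨lam, hlam, rfl⟩ := mem_hull_range_iff.mp hx
  obtain ⟨μ, hμ, ⟨i, hμi⟩, hsum⟩ := exists_nonneg_eq_zero_of_not_linearIndependent hv hlam
  refine Set.mem_iUnion.mpr ⟨i, mem_hull_range_iff.mpr ⟨fun j => μ j, fun j => hμ j, ?_⟩⟩
  rw [← hsum, Fintype.sum_eq_add_sum_subtype_ne _ i, hμi, zero_smul, zero_add]

variable [TopologicalSpace E] [IsTopologicalAddGroup E] [ContinuousSMul ℝ E] [T2Space E]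

lemma isClosed_hull_range_of_linearIndependent {v : ι → E} (hv : LinearIndependent ℝ v) :
    IsClosed (hull ℝ (Set.range v) : Set E) := by
  rw [coe_hull_range]
  refine (LinearMap.isClosedEmbedding_of_injective ?_).isClosedMap _ isClosed_Ici
  exact LinearMap.ker_eq_bot.mpr (linearIndependent_iff_injective_fintypeLinearCombination.mp hv)

theorem isClosed_hull_range (v : ι → E) : IsClosed (hull ℝ (Set.range v) : Set E) := by
  classical
  induction h : Fintype.card ι using Nat.strong_induction_on generalizing ι with
  | _ k ih =>
  by_cases hv : LinearIndependent ℝ v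
  · exact isClosed_hull_range_of_linearIndependent hv
  rw [coe_hull_range_eq_iUnion_of_not_linearIndependent hv]
  refine isClosed_iUnion_of_finite fun i => ih _ ?_ _ rfl
  have := Fintype.card_pos_iff.mpr ⟨i⟩
  rw [← h, Fintype.card_subtype_compl, Fintype.card_subtype_eq]
  omega

theorem mem_hull_range_of_forall_nonneg [LocallyConvexSpace ℝ E] {v : ι → E} {x : E}
    (h : ∀ f : StrongDual ℝ E, (∀ i, 0 ≤ f (v i)) → 0 ≤ f x) :
    x ∈ hull ℝ (Set.range v) := by
  by_contra hx
  obtain ⟨f, hf, hfx⟩ := ProperCone.hyperplane_separation_point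
    ⟨hull ℝ (Set.range v), isClosed_hull_range v⟩ hx
  exact hfx.not_ge (h f fun i => hf _ (subset_hull (Set.mem_range_self i)))

end PointedCone

namespace Matrix

variable {K L : Type*} [Fintype L]

theorem exists_nonneg_transpose_mulVec_eq_of_forall_dotProduct_nonpos [Fintype K]
    (M : Matrix K L ℝ) (d : L → ℝ) (h : ∀ z, M *ᵥ z ≤ 0 → d ⬝ᵥ z ≤ 0) :
    ∃ lam, 0 ≤ lam ∧ Mᵀ *ᵥ lam = d := by
  classical
  have hd : d ∈ PointedCone.hull ℝ (Set.range M) := by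
    refine PointedCone.mem_hull_range_of_forall_nonneg fun f hf => ?_
    set z : L → ℝ := fun j => -f (Pi.single j 1)
    have hfz (w : L → ℝ) : f w = -(w ⬝ᵥ z) := by
      have hsingle (j : L) : (fun k => if j = k then (1 : ℝ) else 0) = Pi.single j 1 := by
        ext k; simp [Pi.single_apply, eq_comm]
      rw [show f w = (f : (L → ℝ) →ₗ[ℝ] ℝ) w from rfl, LinearMap.pi_apply_eq_sum_univ]
      simp [z, dotProduct, hsingle]
    have hMz : M *ᵥ z ≤ 0 := fun i => by simpa [mulVec, hfz] using hf i
    simpa [hfz] using h z hMz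
  obtain ⟨lam, hlam, hsum⟩ := PointedCone.mem_hull_range_iff.mp hd
  exact ⟨lam, hlam, by rw [mulVec_transpose, vecMul_eq_sum, ← hsum]⟩

lemma dotProduct_le_transpose_mulVec_dotProduct [Fintype K] {M : Matrix K L ℝ} {q : K → ℝ}
    {x : L → ℝ} {y : K → ℝ} (hx : M *ᵥ x ≤ q) (hy : y ≤ 0) : q ⬝ᵥ y ≤ (Mᵀ *ᵥ y) ⬝ᵥ x := by
  rw [mulVec_transpose, ← dotProduct_mulVec, dotProduct_comm, ← neg_le_neg_iff, ← neg_dotProduct,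
    ← neg_dotProduct]
  exact dotProduct_le_dotProduct_of_nonneg_left hx (neg_nonneg.mpr hy)

section PrimalBounded

variable {M : Matrix K L ℝ} {q : K → ℝ} {c : L → ℝ} {v : ℝ} {x₀ : L → ℝ}

lemma nonneg_dotProduct_of_mulVec_nonpos (hx₀ : M *ᵥ x₀ ≤ q)
    (hbound : ∀ x, M *ᵥ x ≤ q → v ≤ c ⬝ᵥ x) {x : L → ℝ} (hx : M *ᵥ x ≤ 0) : 0 ≤ c ⬝ᵥ x := by
  by_contra! hcx
  set r := (v - 1 - c ⬝ᵥ x₀) / (c ⬝ᵥ x)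
  have hr : 0 ≤ r := div_nonneg_of_nonpos (by linarith [hbound x₀ hx₀]) hcx.le
  have hfeas : M *ᵥ (x₀ + r • x) ≤ q := by
    rw [mulVec_add, mulVec_smul]
    exact fun i => by
      simpa using add_le_of_le_of_nonpos (hx₀ i) (mul_nonpos_of_nonneg_of_nonpos hr (hx i))
  have hval : c ⬝ᵥ (x₀ + r • x) = v - 1 := by
    rw [dotProduct_add, dotProduct_smul, smul_eq_mul, div_mul_cancel₀ _ hcx.ne]
    ring
  linarith [hbound _ hfeas]

lemma mul_le_dotProduct_of_mulVec_le_smul (hx₀ : M *ᵥ x₀ ≤ q)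
    (hbound : ∀ x, M *ᵥ x ≤ q → v ≤ c ⬝ᵥ x) {x : L → ℝ} {s : ℝ} (hs : 0 ≤ s)
    (hx : M *ᵥ x ≤ s • q) : v * s ≤ c ⬝ᵥ x := by
  rcases hs.eq_or_lt with rfl | hs
  · simpa using nonneg_dotProduct_of_mulVec_nonpos hx₀ hbound (by simpa using hx)
  · have hfeas : M *ᵥ (s⁻¹ • x) ≤ q := by
      rw [mulVec_smul]
      exact fun i => by simpa [inv_mul_le_iff₀ hs] using hx i
    have := hbound _ hfeas
    rwa [dotProduct_smul, smul_eq_mul, le_inv_mul_iff₀ hs, mul_comm] at this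

theorem exists_dual_le_of_primal_bounded [Fintype K] (hx₀ : M *ᵥ x₀ ≤ q)
    (hbound : ∀ x, M *ᵥ x ≤ q → v ≤ c ⬝ᵥ x) :
    ∃ y, y ≤ 0 ∧ Mᵀ *ᵥ y = c ∧ v ≤ q ⬝ᵥ y := by
  -- homogenize: `(x, t)` with `M x + t q ≤ 0` and `t ≤ 0` satisfies `c ⬝ᵥ x + t v ≥ 0`
  let N : Matrix (K ⊕ Unit) (L ⊕ Unit) ℝ := fromBlocks M (replicateCol Unit q) 0 1
  obtain ⟨lam, hlam, hN⟩ := exists_nonneg_transpose_mulVec_eq_of_forall_dotProduct_nonpos N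
    (Sum.elim (-c) fun _ => -v) fun z hz => by
      have hs : 0 ≤ -z (.inr ()) := by
        have := hz (.inr ())
        simp [N, mulVec, dotProduct] at this
        linarith
      have hx : M *ᵥ (z ∘ .inl) ≤ (-z (.inr ())) • q := fun i => by
        have := hz (.inl i)
        simp [N, mulVec, dotProduct] at this ⊢
        linarith
      have := mul_le_dotProduct_of_mulVec_le_smul hx₀ hbound hs hx
      rw [← Sum.elim_comp_inl_inr z, sumElim_dotProduct_sumElim]
      simp [dotProduct] at this ⊢
      linarith
  refine ⟨-(lam ∘ .inl), fun i => by simpa using hlam (.inl i), funext fun j => ?_, ?_⟩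
  · have := congrFun hN (.inl j)
    simp [N, mulVec, dotProduct] at this ⊢
    linarith
  · have := congrFun hN (.inr ())
    simp [N, mulVec, dotProduct] at this ⊢
    linarith [show 0 ≤ lam (.inr ()) from hlam _]

end PrimalBounded

theorem exists_primal_le_of_dual_bounded [Fintype K] {M : Matrix K L ℝ} {q : K → ℝ} {c : L → ℝ}
    {v : ℝ} {y₀ : K → ℝ} (hy₀ : y₀ ≤ 0) (hy₀M : Mᵀ *ᵥ y₀ = c)
    (hbound : ∀ y, y ≤ 0 → Mᵀ *ᵥ y = c → q ⬝ᵥ y ≤ v) :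
    ∃ x, M *ᵥ x ≤ q ∧ c ⬝ᵥ x ≤ v := by
  classical
  -- the dual program in inequality form: `Mᵀ y ≤ c`, `-Mᵀ y ≤ -c`, `y ≤ 0`
  let D : Matrix ((L ⊕ L) ⊕ K) K ℝ := fromRows (fromRows Mᵀ (-Mᵀ)) 1
  let r : (L ⊕ L) ⊕ K → ℝ := Sum.elim (Sum.elim c (-c)) 0
  have hD (y : K → ℝ) : D *ᵥ y ≤ r ↔ y ≤ 0 ∧ Mᵀ *ᵥ y = c := by
    simp only [D, r, fromRows_mulVec, Sum.elim_le_elim_iff, one_mulVec, neg_mulVec, neg_le_neg_iff]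
    exact ⟨fun ⟨⟨h₁, h₂⟩, h₃⟩ => ⟨h₃, le_antisymm h₁ h₂⟩, fun ⟨h₃, h⟩ => ⟨⟨h.le, h.ge⟩, h₃⟩⟩
  obtain ⟨w, hw, hwD, hwr⟩ := exists_dual_le_of_primal_bounded (c := -q) (v := -v)
    ((hD y₀).mpr ⟨hy₀, hy₀M⟩) fun y hy => by
      obtain ⟨h0, hM⟩ := (hD y).mp hy
      simpa [neg_dotProduct] using hbound y h0 hM
  refine ⟨w ∘ .inl ∘ .inr - w ∘ .inl ∘ .inl, fun i => ?_, ?_⟩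
  · have hwi := congrFun hwD i
    have := hw (.inr i)
    simp [D, mulVec, dotProduct, Fintype.sum_sum_type, one_apply, mul_sub,
      Finset.sum_sub_distrib] at hwi this ⊢
    linarith
  · simp [r, dotProduct, Fintype.sum_sum_type, mul_sub, Finset.sum_sub_distrib] at hwr ⊢
    linarith

theorem primal_optimal_iff_dual_optimal [Fintype K] (M : Matrix K L ℝ) (q : K → ℝ) (c : L → ℝ)
    (v : ℝ) :
    (∃ x, M *ᵥ x ≤ q ∧ c ⬝ᵥ x = v ∧ ∀ x', M *ᵥ x' ≤ q → c ⬝ᵥ x ≤ c ⬝ᵥ x') ↔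
      ∃ y, (Mᵀ *ᵥ y = c ∧ y ≤ 0) ∧ q ⬝ᵥ y = v ∧
        ∀ y', (Mᵀ *ᵥ y' = c ∧ y' ≤ 0) → q ⬝ᵥ y' ≤ q ⬝ᵥ y := by
  constructor
  · rintro ⟨x, hx, rfl, hopt⟩
    obtain ⟨y, hy, hyM, hxy⟩ := exists_dual_le_of_primal_bounded hx hopt
    have hyx := hyM ▸ dotProduct_le_transpose_mulVec_dotProduct hx hy
    refine ⟨y, ⟨hyM, hy⟩, le_antisymm hyx hxy, fun y' ⟨hy'M, hy'⟩ => ?_⟩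
    calc q ⬝ᵥ y' ≤ c ⬝ᵥ x := hy'M ▸ dotProduct_le_transpose_mulVec_dotProduct hx hy'
      _ ≤ q ⬝ᵥ y := hxy
  · rintro ⟨y, ⟨hyM, hy⟩, rfl, hopt⟩
    obtain ⟨x, hx, hxy⟩ :=
      exists_primal_le_of_dual_bounded hy hyM fun y' hy' hy'M => hopt y' ⟨hy'M, hy'⟩
    have hyx := hyM ▸ dotProduct_le_transpose_mulVec_dotProduct hx hy
    refine ⟨x, hx, le_antisymm hxy hyx, fun x' hx' => ?_⟩
    calc c ⬝ᵥ x ≤ q ⬝ᵥ y := hxy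
      _ ≤ c ⬝ᵥ x' := hyM ▸ dotProduct_le_transpose_mulVec_dotProduct hx' hy

end Matrix

theorem finite_optimal_values_duality_fixed_matrix_general (m n : ℕ)
    (A : Matrix (Fin m) (Fin n) ℝ) (bl bu : Fin m → ℝ) (cl cu : Fin n → ℝ) (v : ℝ) :
    (∃ (b : Fin m → ℝ) (c : Fin n → ℝ), bl ≤ b ∧ b ≤ bu ∧ cl ≤ c ∧ c ≤ cu ∧
      ∃ x : Fin n → ℝ, A.mulVec x ≤ b ∧ c ⬝ᵥ x = v ∧
        ∀ x' : Fin n → ℝ, A.mulVec x' ≤ b → c ⬝ᵥ x ≤ c ⬝ᵥ x') ↔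
    (∃ (b : Fin m → ℝ) (c : Fin n → ℝ), bl ≤ b ∧ b ≤ bu ∧ cl ≤ c ∧ c ≤ cu ∧
      ∃ y : Fin m → ℝ, (Aᵀ.mulVec y = c ∧ y ≤ 0) ∧ b ⬝ᵥ y = v ∧
        ∀ y' : Fin m → ℝ, (Aᵀ.mulVec y' = c ∧ y' ≤ 0) → b ⬝ᵥ y' ≤ b ⬝ᵥ y) := by
  simp only [Matrix.primal_optimal_iff_dual_optimal]

/-- An interval LP `min cᵀx, Ax ≤ b` with a fixed coefficient matrix and its dual interval
LP `max bᵀy, Aᵀy = c, y ≤ 0` have the same set of finite optimal values. -/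
theorem finite_optimal_values_duality_fixed_matrix (m n : ℕ)
    (A : Matrix (Fin m) (Fin n) ℝ) (bl bu : Fin m → ℝ) (cl cu : Fin n → ℝ)
    (hb : bl ≤ bu) (hc : cl ≤ cu) (v : ℝ) :
    (∃ (b : Fin m → ℝ) (c : Fin n → ℝ), bl ≤ b ∧ b ≤ bu ∧ cl ≤ c ∧ c ≤ cu ∧
      ∃ x : Fin n → ℝ, A.mulVec x ≤ b ∧ c ⬝ᵥ x = v ∧
        ∀ x' : Fin n → ℝ, A.mulVec x' ≤ b → c ⬝ᵥ x ≤ c ⬝ᵥ x') ↔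
    (∃ (b : Fin m → ℝ) (c : Fin n → ℝ), bl ≤ b ∧ b ≤ bu ∧ cl ≤ c ∧ c ≤ cu ∧
      ∃ y : Fin m → ℝ, (Aᵀ.mulVec y = c ∧ y ≤ 0) ∧ b ⬝ᵥ y = v ∧
        ∀ y' : Fin m → ℝ, (Aᵀ.mulVec y' = c ∧ y' ≤ 0) → b ⬝ᵥ y' ≤ b ⬝ᵥ y) :=
  finite_optimal_values_duality_fixed_matrix_general m n A bl bu cl cu v
end
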